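/- arXiv:2407.19091 — 6 statements merged into one kernel-verified Lean document; each statement's English description precedes it below -/
import Mathlib

section
/- Let X be a locally compact Hausdorff space, w : X → 𝕂 a bounded continuous weight function, and f : X → X a continuous map such that f⁻¹(K) ∩ X_ε is compact for every ε > 0 and every compact K ⊆ X, where X_ε := {x ∈ X : |w(x)| ≥ ε} (so that the weighted composition operator C_{w,f} is a bounded linear operator on C₀(X)). Then C_{w,f} is Li-Yorke chaotic if and only if there exists a sequence (B_i)_{i∈ℕ} of relatively compact open subsets of X such that: (A) there is an increasing sequence (n_j)_{j∈ℕ} of positive integers with lim_{j→∞} ‖w^{(n_j)}‖_{f^{-n_j}(B_i)} = 0 for all i ∈ ℕ; and (B) sup{ ‖w^{(n)}‖_{f^{-n}(B_i)} : i, n ∈ ℕ } = ∞. -/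
open Filter Topology MeasureTheory ENNReal

noncomputable section

def LiYorkePair {M : Type*} [PseudoMetricSpace M] (g : M → M) (x y : M) : Prop :=
  Filter.liminf (fun n : ℕ => edist (g^[n] x) (g^[n] y)) Filter.atTop = 0 ∧
  0 < Filter.limsup (fun n : ℕ => edist (g^[n] x) (g^[n] y)) Filter.atTop

def LiYorkeChaotic {M : Type*} [PseudoMetricSpace M] (g : M → M) : Prop :=
  ∃ S : Set M, ¬ S.Countable ∧ S.Pairwise (LiYorkePair g)

def DenselyLiYorkeChaotic {M : Type*} [PseudoMetricSpace M] (g : M → M) : Prop :=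
  ∃ S : Set M, Dense S ∧ ¬ S.Countable ∧ S.Pairwise (LiYorkePair g)

/-! A pair `(φ, ψ)` is Li-Yorke for the linear map `T = C_{w,f}` iff `φ - ψ` is semi-irregular:
its orbit clusters at `0` without tending to `0`. A semi-irregular vector spans an uncountable
scrambled line, so Li-Yorke chaos amounts to having a semi-irregular vector `z`.

Given `z`, the open sets `B_{m,k} = {|T^m z| > 1/(k+1)}` are relatively compact, satisfy (A) along
any subsequence with `T^{n_j} z → 0` because `|w⁽ⁿ⁾| · |T^m z ∘ fⁿ| = |T^n (T^m z)|`, and satisfy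
(B) since a bound `M` for the weights would give `‖T^N z‖ ≤ M ‖T^m z‖` for all `m < N`.

Conversely, (A) makes `T^{n_j} ψ → 0` for every `ψ` supported in some `B_i`, and (B) provides
such bumps with `‖T^q ψ‖` arbitrarily large. A semi-irregular vector is then the limit of partial
sums `x_k`, each obtained from the previous one by adding a small multiple of a bump only when
needed to make the orbit large at a new time `s_k`, followed by a time `t_{k+1} > s_k` at which
`T^{t_{k+1}} x_{k+1}` is small. The increments shrink fast compared with `C^{t_k}`, where `C ≥ 1`
bounds `|w|`, so the limit inherits both properties.
-/

section LiYorke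

lemma liminf_edist_eq_zero_iff_mapClusterPt {α : Type*} [PseudoEMetricSpace α] {u : ℕ → α}
    {a : α} : liminf (fun n => edist (u n) a) atTop = 0 ↔ MapClusterPt a atTop u := by
  rw [← nonpos_iff_eq_zero, liminf_le_iff, Metric.nhds_basis_eball.mapClusterPt_iff_frequently]
  rfl

lemma zero_lt_limsup_edist_iff_not_tendsto {α : Type*} [PseudoEMetricSpace α] {u : ℕ → α}
    {a : α} : 0 < limsup (fun n => edist (u n) a) atTop ↔ ¬ Tendsto u atTop (𝓝 a) := by
  rw [pos_iff_ne_zero, not_iff_not, tendsto_iff_edist_tendsto_0]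
  exact ⟨fun h => tendsto_of_le_liminf_of_limsup_le bot_le h.le, Tendsto.limsup_eq⟩

def IsSemiIrregular {E : Type*} [TopologicalSpace E] [Zero E] (T : E → E) (x : E) : Prop :=
  MapClusterPt 0 atTop (fun n => T^[n] x) ∧ ¬ Tendsto (fun n => T^[n] x) atTop (𝓝 0)

lemma LinearMap.iterate_map_smul {R M : Type*} [Semiring R] [AddCommMonoid M] [Module R M]
    (T : M →ₗ[R] M) (n : ℕ) (c : R) (x : M) : T^[n] (c • x) = c • T^[n] x := by
  rw [← Module.End.coe_pow, map_smul]

section Normed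

variable {E : Type*} [NormedAddCommGroup E] {T : E → E} {x : E}

lemma IsSemiIrregular.exists_strictMono_tendsto_zero (hx : IsSemiIrregular T x) :
    ∃ n : ℕ → ℕ, StrictMono n ∧ (∀ j, 0 < n j) ∧ Tendsto (fun j => T^[n j] x) atTop (𝓝 0) := by
  obtain ⟨n, hn, hlim⟩ := hx.1.tendsto_subseq
  exact ⟨n ∘ Nat.succ, fun a b h => hn (Nat.succ_lt_succ h), fun j => (Nat.zero_le _).trans_lt
    (hn j.lt_succ_self), hlim.comp (tendsto_add_atTop_nat 1)⟩

lemma IsSemiIrregular.exists_mul_norm_lt_norm (hx : IsSemiIrregular T x) (M : ℝ) :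
    ∃ m N, m < N ∧ M * ‖T^[m] x‖ < ‖T^[N] x‖ := by
  have hδ := hx.2
  rw [NormedAddGroup.tendsto_nhds_zero] at hδ
  push Not at hδ
  obtain ⟨δ, hδ, hfreq⟩ := hδ
  obtain ⟨m, hm⟩ := (Metric.nhds_basis_ball.mapClusterPt_iff_frequently.1 hx.1 (δ / (|M| + 1))
    (by positivity)).exists
  obtain ⟨N, hN, hmN⟩ := (hfreq.and_eventually (eventually_gt_atTop m)).exists
  rw [Metric.mem_ball, dist_zero_right, lt_div_iff₀ (by positivity)] at hm
  refine ⟨m, N, hmN, ?_⟩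
  nlinarith [le_abs_self M, abs_nonneg M, norm_nonneg (T^[m] x)]

end Normed

variable {E : Type*} [NormedAddCommGroup E] [NormedSpace ℝ E] (T : E →ₗ[ℝ] E)

theorem liYorkePair_iff_isSemiIrregular_sub {x y : E} :
    LiYorkePair T x y ↔ IsSemiIrregular T (x - y) := by
  have h : ∀ n, edist (T^[n] x) (T^[n] y) = edist (T^[n] (x - y)) 0 := fun n => by
    rw [edist_eq_enorm_sub, edist_eq_enorm_sub, sub_zero, iterate_map_sub]
  simp only [LiYorkePair, IsSemiIrregular, h, liminf_edist_eq_zero_iff_mapClusterPt,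
    zero_lt_limsup_edist_iff_not_tendsto]

variable {T}

lemma IsSemiIrregular.ne_zero {x : E} (hx : IsSemiIrregular T x) : x ≠ 0 := by
  rintro rfl
  exact hx.2 (by simp only [iterate_map_zero, tendsto_const_nhds])

lemma IsSemiIrregular.smul {x : E} (hx : IsSemiIrregular T x) {c : ℝ} (hc : c ≠ 0) :
    IsSemiIrregular T (c • x) := by
  simp only [IsSemiIrregular, LinearMap.iterate_map_smul]
  refine ⟨?_, fun hlim => hx.2 ?_⟩
  · simpa [Function.comp_def] using hx.1.continuousAt_comp (continuous_const_smul c).continuousAt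
  · simpa [smul_smul, inv_mul_cancel₀ hc] using hlim.const_smul c⁻¹

variable (T)

theorem liYorkeChaotic_iff_exists_isSemiIrregular :
    LiYorkeChaotic T ↔ ∃ x, IsSemiIrregular T x := by
  constructor
  · rintro ⟨S, hS, hpair⟩
    obtain ⟨x, hx, y, hy, hxy⟩ : ∃ x ∈ S, ∃ y ∈ S, x ≠ y := by
      by_contra! h
      exact hS (Set.Subsingleton.countable h)
    exact ⟨x - y, (liYorkePair_iff_isSemiIrregular_sub T).1 (hpair hx hy hxy)⟩
  · rintro ⟨x, hx⟩
    have hinj : Function.Injective fun t : ℝ => t • x := smul_left_injective ℝ hx.ne_zero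
    refine ⟨Set.range fun t : ℝ => t • x, fun hc => ?_, ?_⟩
    · exact Set.not_countable_univ (by simpa [Set.preimage_range] using hc.preimage hinj)
    · rintro _ ⟨s, rfl⟩ _ ⟨t, rfl⟩ hst
      rw [liYorkePair_iff_isSemiIrregular_sub, ← sub_smul]
      exact hx.smul (sub_ne_zero.2 fun h => hst (h ▸ rfl))

end LiYorke

lemma exists_seq_of_forall_exists_succ {α : Type*} {P : ℕ → α → Prop} {R : ℕ → α → α → Prop}
    {a : α} (ha : P 0 a) (h : ∀ k a, P k a → ∃ b, P (k + 1) b ∧ R k a b) :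
    ∃ u : ℕ → α, ∀ k, P k (u k) ∧ R k (u k) (u (k + 1)) := by
  choose! g hg using h
  let u : ℕ → α := fun k => Nat.rec a (fun k b => g k b) k
  have hu : ∀ k, P k (u k) := fun k => by
    induction k with
    | zero => exact ha
    | succ k ih => exact (hg k _ ih).1
  exact ⟨u, fun k => ⟨hu k, (hg k _ (hu k)).2⟩⟩

section Construction

variable {E : Type*} [NormedAddCommGroup E]

lemma exists_tendsto_and_mul_norm_sub_le [CompleteSpace E] {x : ℕ → E} {c : ℕ → ℝ}
    (hc : Monotone c) (hc1 : ∀ k, 1 ≤ c k) (h : ∀ k, c k * ‖x (k + 1) - x k‖ ≤ 1 / 2 ^ (k + 1)) :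
    ∃ a, Tendsto x atTop (𝓝 a) ∧ ∀ k, c k * ‖a - x k‖ ≤ 1 / 2 ^ k := by
  have hstep : ∀ k m, k ≤ m → dist (x m) (x (m + 1)) ≤ 1 / 2 ^ (m + 1) / c k := fun k m hkm => by
    rw [dist_comm, dist_eq_norm, le_div_iff₀ (by linarith [hc1 k]), mul_comm]
    exact (mul_le_mul_of_nonneg_right (hc hkm) (norm_nonneg _)).trans (h m)
  obtain ⟨a, ha⟩ := cauchySeq_tendsto_of_complete <| cauchySeq_of_le_geometric_two (C := 1)
    fun m => (hstep 0 m m.zero_le).trans <| by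
      rw [div_le_iff₀ (by linarith [hc1 0])]
      field_simp
      rw [pow_succ]
      nlinarith [hc1 0, pow_pos (two_pos (α := ℝ)) m]
  refine ⟨a, ha, fun k => ?_⟩
  have hk := dist_le_of_le_geometric_two_of_tendsto₀ (C := 1 / 2 ^ k / c k)
    (f := fun m => x (m + k))
    (fun m => by
      rw [add_right_comm]
      refine (hstep k (m + k) (k.le_add_left m)).trans_eq ?_
      rw [pow_succ, pow_add]
      field_simp)
    (ha.comp (tendsto_add_atTop_nat k))
  rw [dist_comm, dist_eq_norm, zero_add, le_div_iff₀ (by linarith [hc1 k])] at hk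
  linarith

variable [NormedSpace ℝ E] {T : E →ₗ[ℝ] E} {C : ℝ} {n : ℕ → ℕ}

lemma exists_perturbation_of_unbounded (hC1 : 1 ≤ C) (hC : ∀ k v, ‖T^[k] v‖ ≤ C ^ k * ‖v‖)
    (hn : Tendsto n atTop atTop)
    (hunb : ∀ R, ∃ y, Tendsto (fun j => T^[n j] y) atTop (𝓝 0) ∧ ‖y‖ ≤ 1 ∧ ∃ q, R < ‖T^[q] y‖)
    (x : E) (hx : Tendsto (fun j => T^[n j] x) atTop (𝓝 0)) (N : ℕ) (ε : ℝ) (hε : 0 < ε) :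
    ∃ x' s t, Tendsto (fun j => T^[n j] x') atTop (𝓝 0) ∧ ‖x' - x‖ ≤ ε ∧ N < s ∧ s < t ∧
      2 ≤ ‖T^[s] x'‖ ∧ ‖T^[t] x'‖ ≤ ε := by
  obtain ⟨y, hy, hy1, s, hs⟩ := hunb (max (4 / ε) (C ^ N))
  have hNs : N < s := by
    by_contra! h
    have : ‖T^[s] y‖ ≤ C ^ N := calc
      ‖T^[s] y‖ ≤ C ^ s * ‖y‖ := hC s y
      _ ≤ C ^ s := mul_le_of_le_one_right (by positivity) hy1
      _ ≤ C ^ N := pow_le_pow_right₀ hC1 h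
    exact ((le_max_right _ _).trans_lt hs).not_ge this
  obtain ⟨x', hx', hx'x, hs'⟩ : ∃ x', Tendsto (fun j => T^[n j] x') atTop (𝓝 0) ∧
      ‖x' - x‖ ≤ ε ∧ 2 ≤ ‖T^[s] x'‖ := by
    by_cases h : 2 ≤ ‖T^[s] x‖
    · exact ⟨x, hx, by simpa using hε.le, h⟩
    -- otherwise the orbit of `ε • y` is large enough at time `s` to outweigh that of `x`
    refine ⟨x + ε • y, ?_, ?_, ?_⟩
    · simpa [iterate_map_add, LinearMap.iterate_map_smul] using hx.add (hy.const_smul ε)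
    · rw [add_sub_cancel_left, norm_smul, Real.norm_of_nonneg hε.le]
      exact mul_le_of_le_one_right hε.le hy1
    · have h4 : 4 < ε * ‖T^[s] y‖ := by
        have := (le_max_left _ _).trans_lt hs
        rwa [div_lt_iff₀' hε] at this
      have := norm_sub_le (T^[s] x + ε • T^[s] y) (T^[s] x)
      rw [add_sub_cancel_left, norm_smul, Real.norm_of_nonneg hε.le] at this
      rw [iterate_map_add, LinearMap.iterate_map_smul]
      linarith
  obtain ⟨j, hsj, hj⟩ := ((hn.eventually_gt_atTop s).and
    ((tendsto_zero_iff_norm_tendsto_zero.1 hx').eventually (eventually_le_nhds hε))).exists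
  exact ⟨x', s, n j, hx', hx'x, hNs, hsj, hs', hj⟩

lemma exists_seq_of_unbounded (hC1 : 1 ≤ C) (hC : ∀ k v, ‖T^[k] v‖ ≤ C ^ k * ‖v‖)
    (hn : Tendsto n atTop atTop)
    (hunb : ∀ R, ∃ y, Tendsto (fun j => T^[n j] y) atTop (𝓝 0) ∧ ‖y‖ ≤ 1 ∧ ∃ q, R < ‖T^[q] y‖) :
    ∃ (x : ℕ → E) (t s : ℕ → ℕ), (∀ k, ‖T^[t k] (x k)‖ ≤ 1 / 2 ^ k) ∧
      (∀ k, t k < s k ∧ s k < t (k + 1)) ∧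
      (∀ k, C ^ t k * ‖x (k + 1) - x k‖ ≤ 1 / 2 ^ (k + 1)) ∧ ∀ k, 2 ≤ ‖T^[s k] (x (k + 1))‖ := by
  obtain ⟨u, hu⟩ := exists_seq_of_forall_exists_succ
    (P := fun k (p : E × ℕ) => Tendsto (fun j => T^[n j] p.1) atTop (𝓝 0) ∧
      ‖T^[p.2] p.1‖ ≤ 1 / 2 ^ k)
    (R := fun k p p' => ∃ s, p.2 < s ∧ s < p'.2 ∧ C ^ p.2 * ‖p'.1 - p.1‖ ≤ 1 / 2 ^ (k + 1) ∧
      2 ≤ ‖T^[s] p'.1‖)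
    (a := (0, 0)) ⟨by simp [iterate_map_zero], by simp⟩ fun k p hp => by
      have hCp : 1 ≤ C ^ p.2 := one_le_pow₀ hC1
      obtain ⟨x', s, t, hx', hx'x, hps, hst, hs, ht⟩ := exists_perturbation_of_unbounded hC1 hC
        hn hunb p.1 hp.1 p.2 (1 / 2 ^ (k + 1) / C ^ p.2) (by positivity)
      refine ⟨(x', t), ⟨hx', ht.trans (div_le_self (by positivity) hCp)⟩, s, hps, hst, ?_, hs⟩
      rwa [le_div_iff₀ (by positivity), mul_comm] at hx'x
  choose s hts hst hxx hs using fun k => (hu k).2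
  exact ⟨fun k => (u k).1, fun k => (u k).2, s, fun k => (hu k).1.2, fun k => ⟨hts k, hst k⟩,
    hxx, hs⟩

theorem exists_isSemiIrregular_of_unbounded [CompleteSpace E] (hC1 : 1 ≤ C)
    (hC : ∀ k v, ‖T^[k] v‖ ≤ C ^ k * ‖v‖) (hn : Tendsto n atTop atTop)
    (hunb : ∀ R, ∃ y, Tendsto (fun j => T^[n j] y) atTop (𝓝 0) ∧ ‖y‖ ≤ 1 ∧ ∃ q, R < ‖T^[q] y‖) :
    ∃ x, IsSemiIrregular T x := by
  obtain ⟨x, t, s, hxt, hts, hxx, hxs⟩ := exists_seq_of_unbounded hC1 hC hn hunb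
  have ht : StrictMono t := strictMono_nat_of_lt_succ fun k => (hts k).1.trans (hts k).2
  have hs : StrictMono s := strictMono_nat_of_lt_succ fun k => (hts k).2.trans (hts (k + 1)).1
  obtain ⟨a, -, ha⟩ := exists_tendsto_and_mul_norm_sub_le (c := fun k => C ^ t k)
    (fun k l hkl => pow_le_pow_right₀ hC1 (ht.monotone hkl)) (fun k => one_le_pow₀ hC1) hxx
  have hsmall : ∀ k, ‖T^[t k] a‖ ≤ 2 / 2 ^ k := fun k => calc
    ‖T^[t k] a‖ ≤ ‖T^[t k] (x k)‖ + ‖T^[t k] (a - x k)‖ := by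
      rw [iterate_map_sub]; exact norm_le_norm_add_norm_sub' _ _
    _ ≤ 1 / 2 ^ k + 1 / 2 ^ k := add_le_add (hxt k) ((hC _ _).trans (ha k))
    _ = 2 / 2 ^ k := by ring
  have hlarge : ∀ k, 1 ≤ ‖T^[s k] a‖ := fun k => by
    have htail : ‖T^[s k] (a - x (k + 1))‖ ≤ 1 / 2 ^ (k + 1) := calc
      _ ≤ C ^ s k * ‖a - x (k + 1)‖ := hC _ _
      _ ≤ C ^ t (k + 1) * ‖a - x (k + 1)‖ :=
        mul_le_mul_of_nonneg_right (pow_le_pow_right₀ hC1 (hts k).2.le) (norm_nonneg _)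
      _ ≤ 1 / 2 ^ (k + 1) := ha (k + 1)
    have hhalf : 1 / 2 ^ (k + 1) ≤ (1 : ℝ) := by
      rw [div_le_one (by positivity)]; exact one_le_pow₀ one_le_two
    have := norm_le_norm_add_norm_sub (T^[s k] a) (T^[s k] (x (k + 1)))
    rw [← iterate_map_sub] at this
    linarith [hxs k]
  refine ⟨a, MapClusterPt.of_comp ht.tendsto_atTop (Tendsto.mapClusterPt ?_), fun hlim => ?_⟩
  · exact squeeze_zero_norm hsmall
      (tendsto_const_nhds.div_atTop (tendsto_pow_atTop_atTop_of_one_lt one_lt_two))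
  · have hlim' := tendsto_zero_iff_norm_tendsto_zero.1 (hlim.comp hs.tendsto_atTop)
    obtain ⟨k, hk⟩ := (hlim'.eventually (eventually_lt_nhds one_pos)).exists
    exact (hlarge k).not_gt hk

end Construction

namespace ZeroAtInftyContinuousMap

open scoped ZeroAtInfty

variable {X β : Type*} [TopologicalSpace X] [SeminormedAddCommGroup β]

lemma norm_apply_le (φ : C₀(X, β)) (x : X) : ‖φ x‖ ≤ ‖φ‖ :=
  φ.toBCF.norm_coe_le_norm x

lemma norm_le_of_forall {φ : C₀(X, β)} {M : ℝ} (hM : 0 ≤ M) (h : ∀ x, ‖φ x‖ ≤ M) : ‖φ‖ ≤ M :=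
  (BoundedContinuousFunction.norm_le hM).2 h

lemma isCompact_closure_setOf_lt_norm (φ : C₀(X, β)) {r : ℝ} (hr : 0 < r) :
    IsCompact (closure {x | r < ‖φ x‖}) := by
  obtain ⟨K, hK, hKφ⟩ := mem_cocompact.1 (zero_at_infty φ (Metric.ball_mem_nhds 0 hr))
  refine hK.of_isClosed_subset isClosed_closure <| (closure_minimal (fun x hx => le_of_lt hx)
    (isClosed_le continuous_const φ.continuous.norm)).trans fun x hx => ?_
  by_contra hxK
  have := hKφ hxK
  simp only [Set.mem_preimage, Metric.mem_ball, dist_zero_right] at this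
  exact (show r ≤ ‖φ x‖ from hx).not_gt this

lemma exists_bump {𝕂 : Type*} [RCLike 𝕂] [LocallyCompactSpace X] [T2Space X] {U : Set X}
    (hU : IsOpen U) {y : X} (hy : y ∈ U) :
    ∃ ψ : C₀(X, 𝕂), ‖ψ‖ ≤ 1 ∧ ψ y = 1 ∧ ∀ z ∉ U, ψ z = 0 := by
  obtain ⟨g, hg1, hg0, hgc, hg⟩ := exists_continuous_one_zero_of_isCompact isCompact_singleton
    hU.isClosed_compl (Set.disjoint_singleton_left.2 (not_not.2 hy))
  let ψ : C₀(X, 𝕂) := ⟨⟨fun z => (g z : 𝕂), by fun_prop⟩,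
    (hgc.comp_left (g := ((↑) : ℝ → 𝕂)) RCLike.ofReal_zero).is_zero_at_infty⟩
  refine ⟨ψ, norm_le_of_forall zero_le_one fun z => ?_, by simp [ψ, hg1 rfl],
    fun z hz => by simp [ψ, hg0 hz]⟩
  change ‖((g z : ℝ) : 𝕂)‖ ≤ 1
  rw [RCLike.norm_ofReal, abs_of_nonneg (hg z).1]
  exact (hg z).2

end ZeroAtInftyContinuousMap

section WeightedComposition

open scoped ZeroAtInfty
open ZeroAtInftyContinuousMap

variable {𝕂 X : Type*} [RCLike 𝕂] {w : X → 𝕂} {f : X → X}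

def iterWeight (w : X → 𝕂) (f : X → X) (n : ℕ) (x : X) : 𝕂 :=
  ∏ t ∈ Finset.range n, w (f^[t] x)

/-- `‖w⁽ⁿ⁾‖_{f⁻ⁿ(B)}` in the paper's notation. -/
def weightSup (w : X → 𝕂) (f : X → X) (n : ℕ) (B : Set X) : ℝ≥0∞ :=
  ⨆ x ∈ f^[n] ⁻¹' B, (‖iterWeight w f n x‖₊ : ℝ≥0∞)

lemma iterWeight_succ (n : ℕ) (x : X) :
    iterWeight w f (n + 1) x = iterWeight w f n x * w (f^[n] x) :=
  Finset.prod_range_succ _ n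

lemma norm_iterWeight_le {C : ℝ} (hC : ∀ x, ‖w x‖ ≤ C) (n : ℕ) (x : X) :
    ‖iterWeight w f n x‖ ≤ C ^ n := by
  rw [iterWeight, norm_prod]
  exact (Finset.prod_le_prod (fun _ _ => norm_nonneg _) fun t _ => hC _).trans_eq (by simp)

lemma iSup_weightSup_ne_top_iff {B : ℕ → Set X} :
    (⨆ (i : ℕ) (n : ℕ) (_ : 0 < n), weightSup w f n (B i)) ≠ ⊤ ↔
      ∃ M, ∀ i n x, 0 < n → f^[n] x ∈ B i → ‖iterWeight w f n x‖ ≤ M := by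
  constructor
  · intro h
    refine ⟨(⨆ (i : ℕ) (n : ℕ) (_ : 0 < n), weightSup w f n (B i)).toReal,
      fun i n x hn hx => ?_⟩
    rw [← ENNReal.ofReal_le_iff_le_toReal h, ofReal_norm, enorm_eq_nnnorm]
    exact le_iSup_of_le i <| le_iSup_of_le n <| le_iSup_of_le hn <| le_iSup₂_of_le x hx le_rfl
  · rintro ⟨M, hM⟩
    refine ne_top_of_le_ne_top (ENNReal.ofReal_ne_top (r := M)) <|
      iSup_le fun i => iSup_le fun n => iSup_le fun hn => iSup₂_le fun x hx => ?_
    rw [← enorm_eq_nnnorm, ← ofReal_norm]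
    exact ENNReal.ofReal_le_ofReal (hM i n x hn hx)

variable [TopologicalSpace X]

def IsLiYorkeFamily (w : X → 𝕂) (f : X → X) (B : ℕ → Set X) : Prop :=
  (∀ i, IsOpen (B i) ∧ IsCompact (closure (B i))) ∧
  (∃ n : ℕ → ℕ, StrictMono n ∧ (∀ j, 0 < n j) ∧
    ∀ i, Tendsto (fun j => weightSup w f (n j) (B i)) atTop (𝓝 0)) ∧
  (⨆ (i : ℕ) (n : ℕ) (_ : 0 < n), weightSup w f n (B i)) = ⊤

variable {T : C₀(X, 𝕂) → C₀(X, 𝕂)}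

lemma iterate_apply_eq_mul_iterWeight (hT : ∀ φ x, T φ x = φ (f x) * w x) (n : ℕ)
    (φ : C₀(X, 𝕂)) (x : X) : (T^[n] φ) x = φ (f^[n] x) * iterWeight w f n x := by
  induction n generalizing φ with
  | zero => simp [iterWeight]
  | succ n ih =>
    rw [Function.iterate_succ_apply, ih, hT, iterWeight_succ, ← Function.iterate_succ_apply' f]
    ring

lemma isLinearMap_of_apply_eq (hT : ∀ φ x, T φ x = φ (f x) * w x) : IsLinearMap ℝ T where
  map_add φ ψ := by ext x; simp [hT, add_mul]
  map_smul c φ := by ext x; simp [hT]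

lemma norm_iterate_le_of_forall_mem (hT : ∀ φ x, T φ x = φ (f x) * w x) {B : Set X}
    {φ : C₀(X, 𝕂)} (hφ : ∀ y ∉ B, φ y = 0) {n : ℕ} {r : ℝ} (hr : 0 ≤ r)
    (h : ∀ x, f^[n] x ∈ B → ‖iterWeight w f n x‖ ≤ r) : ‖T^[n] φ‖ ≤ r * ‖φ‖ := by
  refine norm_le_of_forall (by positivity) fun x => ?_
  rw [iterate_apply_eq_mul_iterWeight hT, norm_mul]
  by_cases hx : f^[n] x ∈ B
  · rw [mul_comm r]
    exact mul_le_mul (norm_apply_le _ _) (h x hx) (norm_nonneg _) (norm_nonneg _)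
  · simp [hφ _ hx]
    positivity

lemma norm_iterate_le_pow_mul (hT : ∀ φ x, T φ x = φ (f x) * w x) {C : ℝ} (hC0 : 0 ≤ C)
    (hC : ∀ x, ‖w x‖ ≤ C) (n : ℕ) (φ : C₀(X, 𝕂)) : ‖T^[n] φ‖ ≤ C ^ n * ‖φ‖ :=
  norm_iterate_le_of_forall_mem hT (B := Set.univ) (by simp) (by positivity)
    fun x _ => norm_iterWeight_le hC n x

lemma weightSup_setOf_lt_norm_le (hT : ∀ φ x, T φ x = φ (f x) * w x) (φ : C₀(X, 𝕂))
    {r : ℝ} (hr : 0 < r) (n : ℕ) :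
    weightSup w f n {y | r < ‖φ y‖} ≤ ENNReal.ofReal (‖T^[n] φ‖ / r) := by
  refine iSup₂_le fun x hx => ?_
  rw [← enorm_eq_nnnorm, ← ofReal_norm]
  refine ENNReal.ofReal_le_ofReal ((le_div_iff₀ hr).2 ?_)
  calc ‖iterWeight w f n x‖ * r ≤ ‖iterWeight w f n x‖ * ‖φ (f^[n] x)‖ :=
        mul_le_mul_of_nonneg_left (le_of_lt hx) (norm_nonneg _)
    _ = ‖(T^[n] φ) x‖ := by rw [iterate_apply_eq_mul_iterWeight hT, norm_mul, mul_comm]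
    _ ≤ ‖T^[n] φ‖ := norm_apply_le _ _

lemma tendsto_iterate_of_tendsto_weightSup (hT : ∀ φ x, T φ x = φ (f x) * w x) {B : Set X}
    {n : ℕ → ℕ} (hB : Tendsto (fun j => weightSup w f (n j) B) atTop (𝓝 0))
    {φ : C₀(X, 𝕂)} (hφ : ∀ y ∉ B, φ y = 0) :
    Tendsto (fun j => T^[n j] φ) atTop (𝓝 0) := by
  rw [NormedAddGroup.tendsto_nhds_zero]
  intro ε hε
  have hε' : 0 < ε / (‖φ‖ + 1) := by positivity
  filter_upwards [(ENNReal.tendsto_nhds_zero.1 hB) _ (ENNReal.ofReal_pos.2 hε')] with j hj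
  have hw : ∀ x, f^[n j] x ∈ B → ‖iterWeight w f (n j) x‖ ≤ ε / (‖φ‖ + 1) := fun x hx => by
    rw [← ENNReal.ofReal_le_ofReal_iff hε'.le, ofReal_norm, enorm_eq_nnnorm]
    exact (le_iSup₂_of_le x hx le_rfl).trans hj
  calc ‖T^[n j] φ‖ ≤ ε / (‖φ‖ + 1) * ‖φ‖ := norm_iterate_le_of_forall_mem hT hφ hε'.le hw
    _ < ε := by
      rw [div_mul_eq_mul_div, div_lt_iff₀ (by positivity)]
      nlinarith [norm_nonneg φ]

theorem IsSemiIrregular.exists_isLiYorkeFamily (hT : ∀ φ x, T φ x = φ (f x) * w x) {C : ℝ}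
    (hC0 : 0 ≤ C) (hC : ∀ x, ‖w x‖ ≤ C) {z : C₀(X, 𝕂)} (hz : IsSemiIrregular T z) :
    ∃ B, IsLiYorkeFamily w f B := by
  obtain ⟨n, hn_mono, hn_pos, hn⟩ := hz.exists_strictMono_tendsto_zero
  -- `B (pair m k)` is where `T^m z` exceeds `1 / (k + 1)`
  let B : ℕ → Set X := fun i => {x | ((i.unpair.2 : ℝ) + 1)⁻¹ < ‖(T^[i.unpair.1] z) x‖}
  refine ⟨B, fun i => ⟨isOpen_lt continuous_const (map_continuous _).norm,
    isCompact_closure_setOf_lt_norm _ (by positivity)⟩, ⟨n, hn_mono, hn_pos, fun i => ?_⟩, ?_⟩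
  · set m := i.unpair.1
    set r : ℝ := ((i.unpair.2 : ℝ) + 1)⁻¹
    have hr : 0 < r := by positivity
    have hlim : Tendsto (fun j => ENNReal.ofReal (C ^ m * ‖T^[n j] z‖ / r)) atTop (𝓝 0) := by
      simpa using ENNReal.tendsto_ofReal (((tendsto_zero_iff_norm_tendsto_zero.1 hn).const_mul
        (C ^ m)).div_const r)
    refine tendsto_of_tendsto_of_tendsto_of_le_of_le tendsto_const_nhds hlim (fun _ => bot_le)
      fun j => (weightSup_setOf_lt_norm_le hT _ hr _).trans (ENNReal.ofReal_le_ofReal ?_)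
    rw [← Function.iterate_add_apply, add_comm, Function.iterate_add_apply]
    exact div_le_div_of_nonneg_right (norm_iterate_le_pow_mul hT hC0 hC _ _) hr.le
  · by_contra hne
    obtain ⟨M, hM⟩ := iSup_weightSup_ne_top_iff.1 hne
    obtain ⟨m, N, hmN, hlt⟩ := hz.exists_mul_norm_lt_norm (max M 0)
    have hle : ‖T^[N - m] (T^[m] z)‖ ≤ max M 0 * ‖T^[m] z‖ := by
      refine norm_iterate_le_of_forall_mem hT (B := {y | (T^[m] z) y ≠ 0})
        (fun y hy => not_not.1 hy) (le_max_right _ _) fun x hx => ?_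
      obtain ⟨k, hk⟩ := exists_nat_one_div_lt (norm_pos_iff.2 hx)
      have hxB : f^[N - m] x ∈ B (Nat.pair m k) := by simpa [B, one_div] using hk
      exact (hM _ _ x (Nat.sub_pos_of_lt hmN) hxB).trans (le_max_left _ _)
    rw [← Function.iterate_add_apply, Nat.sub_add_cancel hmN.le] at hle
    exact hle.not_gt hlt

theorem IsLiYorkeFamily.exists_isSemiIrregular [LocallyCompactSpace X] [T2Space X]
    (hT : ∀ φ x, T φ x = φ (f x) * w x) {C : ℝ} (hC1 : 1 ≤ C) (hC : ∀ x, ‖w x‖ ≤ C)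
    {B : ℕ → Set X} (hB : IsLiYorkeFamily w f B) : ∃ z, IsSemiIrregular T z := by
  obtain ⟨hBo, ⟨n, hn, -, hA⟩, hBtop⟩ := hB
  refine exists_isSemiIrregular_of_unbounded (T := IsLinearMap.mk' T (isLinearMap_of_apply_eq hT))
    hC1 (norm_iterate_le_pow_mul hT (zero_le_one.trans hC1) hC) hn.tendsto_atTop fun R => ?_
  obtain ⟨i, q, x, -, hx, hR⟩ : ∃ i q x, 0 < q ∧ f^[q] x ∈ B i ∧ R < ‖iterWeight w f q x‖ := by
    by_contra! h
    exact iSup_weightSup_ne_top_iff.2 ⟨R, h⟩ hBtop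
  obtain ⟨ψ, hψ1, hψx, hψ0⟩ := exists_bump (𝕂 := 𝕂) (hBo i).1 hx
  refine ⟨ψ, tendsto_iterate_of_tendsto_weightSup hT (hA i) hψ0, hψ1, q, hR.trans_le ?_⟩
  calc ‖iterWeight w f q x‖ = ‖(T^[q] ψ) x‖ := by
        rw [iterate_apply_eq_mul_iterWeight hT, hψx, one_mul]
    _ ≤ ‖T^[q] ψ‖ := norm_apply_le _ _

end WeightedComposition

theorem weighted_composition_C0_liYorke_iff_general
    {𝕂 : Type} [RCLike 𝕂] {X : Type} [TopologicalSpace X]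
    [LocallyCompactSpace X] [T2Space X]
    (w : X → 𝕂) (hwb : ∃ C : ℝ, ∀ x, ‖w x‖ ≤ C)
    (f : X → X)
    (T : ZeroAtInftyContinuousMap X 𝕂 → ZeroAtInftyContinuousMap X 𝕂)
    (hT : ∀ φ x, T φ x = φ (f x) * w x) :
    LiYorkeChaotic T ↔
      ∃ B : ℕ → Set X,
        (∀ i, IsOpen (B i) ∧ IsCompact (closure (B i))) ∧
        (∃ n : ℕ → ℕ, StrictMono n ∧ (∀ j, 0 < n j) ∧
          ∀ i, Tendsto
            (fun j => ⨆ x ∈ (f^[n j]) ⁻¹' (B i),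
              (‖∏ t ∈ Finset.range (n j), w (f^[t] x)‖₊ : ℝ≥0∞))
            atTop (nhds 0)) ∧
        (⨆ (i : ℕ) (n : ℕ) (_ : 0 < n), ⨆ x ∈ (f^[n]) ⁻¹' (B i),
            (‖∏ t ∈ Finset.range n, w (f^[t] x)‖₊ : ℝ≥0∞)) = ⊤ := by
  obtain ⟨C, hC⟩ := hwb
  have hC' : ∀ x, ‖w x‖ ≤ max C 1 := fun x => (hC x).trans (le_max_left _ _)
  refine (liYorkeChaotic_iff_exists_isSemiIrregular
    (IsLinearMap.mk' T (isLinearMap_of_apply_eq hT))).trans ⟨fun ⟨z, hz⟩ => ?_, fun ⟨B, hB⟩ => ?_⟩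
  · exact hz.exists_isLiYorkeFamily hT (zero_le_one.trans (le_max_right _ _)) hC'
  · exact IsLiYorkeFamily.exists_isSemiIrregular hT (le_max_right _ _) hC' hB

theorem weighted_composition_C0_liYorke_iff
    {𝕂 : Type} [RCLike 𝕂] {X : Type} [TopologicalSpace X]
    [LocallyCompactSpace X] [T2Space X]
    (w : X → 𝕂) (hwc : Continuous w) (hwb : ∃ C : ℝ, ∀ x, ‖w x‖ ≤ C)
    (f : X → X) (hfc : Continuous f)
    (hf : ∀ ε : ℝ, 0 < ε → ∀ K : Set X, IsCompact K →
      IsCompact (f ⁻¹' K ∩ {x | ε ≤ ‖w x‖}))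
    (T : ZeroAtInftyContinuousMap X 𝕂 → ZeroAtInftyContinuousMap X 𝕂)
    (hT : ∀ φ x, T φ x = φ (f x) * w x) :
    LiYorkeChaotic T ↔
      ∃ B : ℕ → Set X,
        (∀ i, IsOpen (B i) ∧ IsCompact (closure (B i))) ∧
        (∃ n : ℕ → ℕ, StrictMono n ∧ (∀ j, 0 < n j) ∧
          ∀ i, Tendsto
            (fun j => ⨆ x ∈ (f^[n j]) ⁻¹' (B i),
              (‖∏ t ∈ Finset.range (n j), w (f^[t] x)‖₊ : ℝ≥0∞))
            atTop (nhds 0)) ∧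
        (⨆ (i : ℕ) (n : ℕ) (_ : 0 < n), ⨆ x ∈ (f^[n]) ⁻¹' (B i),
            (‖∏ t ∈ Finset.range n, w (f^[t] x)‖₊ : ℝ≥0∞)) = ⊤ :=
  weighted_composition_C0_liYorke_iff_general w hwb f T hT
end
end

section
/- Let X be a locally compact Hausdorff space and f : X → X a proper continuous map (i.e., f⁻¹(K) is compact for every compact K ⊆ X), so that the composition operator C_f(φ) := φ∘f is a bounded linear operator on C₀(X). Then C_f is never Li-Yorke chaotic. -/
open Filter Topology MeasureTheory ENNReal

noncomputable section

theorem composition_C0_never_liYorke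
    {𝕂 : Type} [RCLike 𝕂] {X : Type} [TopologicalSpace X]
    [LocallyCompactSpace X] [T2Space X]
    (f : X → X) (hfc : Continuous f)
    (hf : ∀ K : Set X, IsCompact K → IsCompact (f ⁻¹' K))
    (T : ZeroAtInftyContinuousMap X 𝕂 → ZeroAtInftyContinuousMap X 𝕂)
    (hT : ∀ φ x, T φ x = φ (f x)) :
    ¬ LiYorkeChaotic T := by
  -- T is nonexpansive
  have hne : ∀ φ ψ : ZeroAtInftyContinuousMap X 𝕂, dist (T φ) (T ψ) ≤ dist φ ψ := by
    intro φ ψ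
    rw [← ZeroAtInftyContinuousMap.dist_toBCF_eq_dist]
    refine BoundedContinuousFunction.dist_le dist_nonneg |>.mpr fun x => ?_
    have : dist ((T φ) x) ((T ψ) x) = dist (φ (f x)) (ψ (f x)) := by rw [hT, hT]
    calc dist ((T φ).toBCF x) ((T ψ).toBCF x) = dist (φ (f x)) (ψ (f x)) := this
      _ = dist (φ.toBCF (f x)) (ψ.toBCF (f x)) := rfl
      _ ≤ dist φ.toBCF ψ.toBCF := BoundedContinuousFunction.dist_coe_le_dist _
      _ = dist φ ψ := ZeroAtInftyContinuousMap.dist_toBCF_eq_dist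
  have hne' : ∀ φ ψ : ZeroAtInftyContinuousMap X 𝕂, edist (T φ) (T ψ) ≤ edist φ ψ := by
    intro φ ψ
    rw [edist_dist, edist_dist]
    exact ENNReal.ofReal_le_ofReal (hne φ ψ)
  rintro ⟨S, hSc, hSp⟩
  obtain ⟨x, hx, y, hy, hxy⟩ :=
    Set.not_subsingleton_iff.mp (fun h => hSc h.countable)
  obtain ⟨hlim, hsup⟩ := hSp hx hy hxy
  -- the sequence of edistances is antitone
  have hanti : Antitone (fun n : ℕ => edist (T^[n] x) (T^[n] y)) := by
    refine antitone_nat_of_succ_le fun n => ?_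
    simp only [Function.iterate_succ_apply']
    exact hne' _ _
  have htend := tendsto_atTop_iInf hanti
  rw [htend.liminf_eq] at hlim
  rw [htend.limsup_eq, hlim] at hsup
  exact lt_irrefl _ hsup
end
end

section
/- Let (X, 𝔐, μ) be a positive measure space with μ semifinite (every set of infinite measure contains a set of positive finite measure), let p ∈ [1,∞), and let w : X → 𝕂 be a measurable map. Then φ·w ∈ L^p(μ) for all φ ∈ L^p(μ) if and only if w ∈ L^∞(μ). -/
open Filter Topology MeasureTheory ENNReal

noncomputable section

/-!
If `φ ↦ φ * w` maps `Lᵖ` into itself, it is a closed (a.e.-convergent subsequences identify the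
limit) everywhere-defined linear operator on a Banach space, hence bounded, say by `C`. Testing it
on the indicator of a set `B` of finite positive measure on which `‖w‖ > c` gives
`c μ(B)^{1/p} ≤ C μ(B)^{1/p}`; semifiniteness provides such a `B` whenever `{‖w‖ > c}` is not
null, so `‖w‖∞ ≤ C`.
-/

namespace MeasureTheory

variable {X : Type*} [MeasurableSpace X] {μ : Measure X}

def Measure.IsSemifinite (μ : Measure X) : Prop :=
  ∀ A : Set X, MeasurableSet A → μ A = ⊤ → ∃ B : Set X, B ⊆ A ∧ MeasurableSet B ∧ 0 < μ B ∧ μ B < ⊤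

lemma Measure.IsSemifinite.exists_subset_measure_pos_lt_top (hμ : μ.IsSemifinite) {A : Set X}
    (hA : MeasurableSet A) (hA0 : μ A ≠ 0) :
    ∃ B ⊆ A, MeasurableSet B ∧ 0 < μ B ∧ μ B < ∞ := by
  by_cases hAtop : μ A = ∞
  · exact hμ A hA hAtop
  · exact ⟨A, subset_rfl, hA, pos_iff_ne_zero.2 hA0, lt_top_iff_ne_top.2 hAtop⟩

lemma measure_lt_enorm_eq_zero_of_eLpNorm_indicator_le {E : Type*} [NormedAddCommGroup E]
    [MeasurableSpace E] [OpensMeasurableSpace E] (hμ : μ.IsSemifinite) {p : ℝ≥0∞} (hp : p ≠ 0)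
    {f : X → E} (hf : Measurable f) {C : ℝ≥0∞}
    (hC : ∀ B, MeasurableSet B → μ B < ∞ → eLpNorm (B.indicator f) p μ ≤ C * μ B ^ (1 / p.toReal))
    {c : ℝ≥0∞} (hc : C < c) : μ {x | c < ‖f x‖ₑ} = 0 := by
  by_contra hA0
  obtain ⟨B, hBA, hB, hB0, hBtop⟩ :=
    hμ.exists_subset_measure_pos_lt_top (measurableSet_lt measurable_const hf.enorm) hA0
  have hlower : c * μ B ^ (1 / p.toReal) ≤ eLpNorm (B.indicator f) p μ :=
    calc c * μ B ^ (1 / p.toReal) = eLpNorm (B.indicator fun _ => c) p μ := by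
          rw [eLpNorm_indicator_const' hB hB0.ne' hp, enorm_eq_self]
      _ ≤ eLpNorm (B.indicator f) p μ := eLpNorm_mono_enorm fun x => by
          by_cases hx : x ∈ B
          · simpa [hx] using (hBA hx).le
          · simp [hx]
  have hpow_pos : 0 < μ B ^ (1 / p.toReal) := ENNReal.rpow_pos hB0 hBtop.ne
  have hpow_top : μ B ^ (1 / p.toReal) ≠ ∞ := by finiteness
  exact hc.not_ge <| (ENNReal.mul_le_mul_iff_left hpow_pos.ne' hpow_top).1 <|
    hlower.trans (hC B hB hBtop)

lemma eLpNorm_top_le_of_eLpNorm_indicator_le {E : Type*} [NormedAddCommGroup E]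
    [MeasurableSpace E] [OpensMeasurableSpace E] (hμ : μ.IsSemifinite) {p : ℝ≥0∞} (hp : p ≠ 0)
    {f : X → E} (hf : Measurable f) {C : ℝ≥0∞}
    (hC : ∀ B, MeasurableSet B → μ B < ∞ → eLpNorm (B.indicator f) p μ ≤ C * μ B ^ (1 / p.toReal)) :
    eLpNorm f ∞ μ ≤ C := by
  rw [eLpNorm_exponent_top]
  by_contra! hlt
  obtain ⟨c, hCc, hc⟩ := exists_between hlt
  refine hc.not_ge (eLpNormEssSup_le_of_ae_enorm_bound ?_)
  simpa only [ae_iff, not_le] using measure_lt_enorm_eq_zero_of_eLpNorm_indicator_le hμ hp hf hC hCc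

section MulLp

variable {𝕜 : Type*} [NontriviallyNormedField 𝕜] {p : ℝ≥0∞} {w : X → 𝕜}

lemma ae_eq_mul_of_tendsto_Lp [Fact (1 ≤ p)] {u v : ℕ → Lp 𝕜 p μ} {f g : Lp 𝕜 p μ}
    (hu : Tendsto u atTop (𝓝 f)) (hv : Tendsto v atTop (𝓝 g)) (huv : ∀ n, v n =ᵐ[μ] u n * w) :
    g =ᵐ[μ] f * w := by
  obtain ⟨ns, hns, hns_ae⟩ := (tendstoInMeasure_of_tendsto_Lp hu).exists_seq_tendsto_ae
  obtain ⟨ms, hms, hms_ae⟩ :=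
    (tendstoInMeasure_of_tendsto_Lp (hv.comp hns.tendsto_atTop)).exists_seq_tendsto_ae
  filter_upwards [hns_ae, hms_ae, ae_all_iff.2 huv] with x hux hvx huvx
  refine tendsto_nhds_unique hvx ?_
  simp only [Function.comp_apply, huvx]
  exact (hux.comp hms.tendsto_atTop).mul_const (w x)

variable (hw : ∀ φ : X → 𝕜, MemLp φ p μ → MemLp (φ * w) p μ)

def mulLp : Lp 𝕜 p μ →ₗ[𝕜] Lp 𝕜 p μ where
  toFun f := (hw f (Lp.memLp f)).toLp
  map_add' f g := by
    rw [← MemLp.toLp_add, MemLp.toLp_eq_toLp_iff]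
    filter_upwards [Lp.coeFn_add f g] with x hx
    simp only [Pi.mul_apply, Pi.add_apply, hx, add_mul]
  map_smul' c f := by
    rw [RingHom.id_apply, ← MemLp.toLp_const_smul, MemLp.toLp_eq_toLp_iff]
    filter_upwards [Lp.coeFn_smul c f] with x hx
    simp only [Pi.mul_apply, Pi.smul_apply, hx, smul_eq_mul, mul_assoc]

lemma coeFn_mulLp (f : Lp 𝕜 p μ) : mulLp hw f =ᵐ[μ] f * w :=
  MemLp.coeFn_toLp (hw f (Lp.memLp f))

variable [CompleteSpace 𝕜] [Fact (1 ≤ p)]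

def mulLpCLM : Lp 𝕜 p μ →L[𝕜] Lp 𝕜 p μ :=
  ContinuousLinearMap.ofSeqClosedGraph fun u f _ hu hTu => Lp.ext <|
    (ae_eq_mul_of_tendsto_Lp hu hTu fun n => coeFn_mulLp hw (u n)).trans (coeFn_mulLp hw f).symm

lemma eLpNorm_indicator_le_enorm_mulLpCLM_mul {B : Set X} (hB : MeasurableSet B)
    (hμB : μ B < ∞) :
    eLpNorm (B.indicator w) p μ ≤ ‖mulLpCLM hw‖ₑ * μ B ^ (1 / p.toReal) := by
  set φ := indicatorConstLp p hB hμB.ne (1 : 𝕜)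
  have hφw : B.indicator w =ᵐ[μ] mulLp hw φ := by
    filter_upwards [indicatorConstLp_coeFn (p := p) (hs := hB) (hμs := hμB.ne) (c := (1 : 𝕜)),
      coeFn_mulLp hw φ] with x hφx hx
    rw [hx, Pi.mul_apply, hφx, ← Set.indicator_mul_left]
    simp only [one_mul]
  rw [eLpNorm_congr_ae hφw, ← Lp.enorm_def]
  refine (mulLpCLM hw).le_opENorm_of_le ?_
  simpa only [enorm_one, one_mul] using
    enorm_indicatorConstLp_le (p := p) (hs := hB) (hμs := hμB.ne) (c := (1 : 𝕜))

end MulLp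

end MeasureTheory

theorem weight_mul_memLp_iff_memLinfty_general
    {𝕂 : Type} [RCLike 𝕂] {X : Type} [MeasurableSpace X] (μ : Measure X)
    (hsemi : ∀ A : Set X, MeasurableSet A → μ A = ⊤ →
      ∃ B : Set X, B ⊆ A ∧ MeasurableSet B ∧ 0 < μ B ∧ μ B < ⊤)
    (p : ℝ≥0∞) (hp1 : 1 ≤ p)
    (w : X → 𝕂) (hwm : Measurable w) :
    (∀ φ : X → 𝕂, MemLp φ p μ → MemLp (φ * w) p μ) ↔ MemLp w ⊤ μ := by
  have : Fact (1 ≤ p) := ⟨hp1⟩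
  refine ⟨fun hw => ⟨hwm.aestronglyMeasurable, ?_⟩, fun hw φ hφ => hw.mul hφ⟩
  exact (eLpNorm_top_le_of_eLpNorm_indicator_le hsemi (one_pos.trans_le hp1).ne' hwm
    fun B hB hμB => eLpNorm_indicator_le_enorm_mulLpCLM_mul hw hB hμB).trans_lt enorm_lt_top

theorem weight_mul_memLp_iff_memLinfty
    {𝕂 : Type} [RCLike 𝕂] {X : Type} [MeasurableSpace X] (μ : Measure X)
    (hsemi : ∀ A : Set X, MeasurableSet A → μ A = ⊤ →
      ∃ B : Set X, B ⊆ A ∧ MeasurableSet B ∧ 0 < μ B ∧ μ B < ⊤)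
    (p : ℝ≥0∞) (hp1 : 1 ≤ p) (hp2 : p ≠ ⊤)
    (w : X → 𝕂) (hwm : Measurable w) :
    (∀ φ : X → 𝕂, MemLp φ p μ → MemLp (φ * w) p μ) ↔ MemLp w ⊤ μ :=
  weight_mul_memLp_iff_memLinfty_general μ hsemi p hp1 w hwm
end
end

section
/- Let (X, 𝔐, μ) be a positive measure space, p ∈ [1,∞), w : X → 𝕂 a measurable weight with φ·w ∈ L^p(μ) for all φ ∈ L^p(μ), and f : X → X a bimeasurable map for which there is a constant c ∈ (0,∞) with ∫_A |w|^p dμ ≤ c·μ(f(A)) for every A ∈ 𝔐. Then for every A ∈ 𝔐 and every n ∈ ℕ, μ_n(A) ≤ cⁿ · μ(fⁿ(A)), where μ₁(A) := ∫_A |w|^p dμ and μ_n(A) := ∫_A |w∘f^{n-1}|^p ⋯ |w∘f|^p |w|^p dμ for n ≥ 2. -/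
open Filter Topology MeasureTheory ENNReal

noncomputable section

/-! Write `ν = W · μ` with `W = |w|^p`. The hypothesis says that `f` pushes `ν|_A` forward
below `C · μ|_{f(A)}`, i.e. `∫_A W · (g ∘ f) dμ ≤ C ∫_{f(A)} g dμ` for every measurable `g ≥ 0`.
Since `∏_{t<n+1} W ∘ f^[t] = W · (∏_{t<n} W ∘ f^[t]) ∘ f`, induction on `n`, with `A` replaced
by `f(A)`, gives `μ_n(A) ≤ Cⁿ μ(fⁿ(A))`. -/

section WeightedImageBound

variable {X : Type*} [MeasurableSpace X] {μ : Measure X} {W : X → ℝ≥0∞} {f : X → X}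
  {C : ℝ≥0∞}

theorem map_restrict_withDensity_le_smul_restrict_image (hf : Measurable f)
    (hbound : ∀ A, MeasurableSet A → ∫⁻ x in A, W x ∂μ ≤ C * μ (f '' A))
    {A : Set X} (hA : MeasurableSet A) :
    ((μ.withDensity W).restrict A).map f ≤ C • μ.restrict (f '' A) := by
  refine Measure.le_iff.2 fun B hB => ?_
  rw [Measure.map_apply hf hB, Measure.restrict_apply (hf hB),
    withDensity_apply _ ((hf hB).inter hA), Measure.smul_apply, Measure.restrict_apply hB,
    smul_eq_mul]
  calc ∫⁻ x in f ⁻¹' B ∩ A, W x ∂μ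
      ≤ C * μ (f '' (f ⁻¹' B ∩ A)) := hbound _ ((hf hB).inter hA)
    _ ≤ C * μ (B ∩ f '' A) := by
        gcongr
        rintro _ ⟨x, ⟨hxB, hxA⟩, rfl⟩
        exact ⟨hxB, x, hxA, rfl⟩

theorem setLIntegral_mul_comp_le (hW : Measurable W) (hf : Measurable f)
    (hbound : ∀ A, MeasurableSet A → ∫⁻ x in A, W x ∂μ ≤ C * μ (f '' A))
    {A : Set X} (hA : MeasurableSet A) {g : X → ℝ≥0∞} (hg : Measurable g) :
    ∫⁻ x in A, W x * g (f x) ∂μ ≤ C * ∫⁻ y in f '' A, g y ∂μ :=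
  calc ∫⁻ x in A, W x * g (f x) ∂μ
      = ∫⁻ x, g (f x) ∂(μ.withDensity W).restrict A := by
        have hgf : Measurable fun x => g (f x) := hg.comp hf
        rw [restrict_withDensity hA, lintegral_withDensity_eq_lintegral_mul _ hW hgf]
        rfl
    _ = ∫⁻ y, g y ∂((μ.withDensity W).restrict A).map f := (lintegral_map hg hf).symm
    _ ≤ ∫⁻ y, g y ∂(C • μ.restrict (f '' A)) :=
        lintegral_mono' (map_restrict_withDensity_le_smul_restrict_image hf hbound hA) le_rfl
    _ = C * ∫⁻ y in f '' A, g y ∂μ := by rw [lintegral_smul_measure, smul_eq_mul]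

theorem setLIntegral_prod_iterate_le (hW : Measurable W) (hf : Measurable f)
    (hf_image : ∀ A, MeasurableSet A → MeasurableSet (f '' A))
    (hbound : ∀ A, MeasurableSet A → ∫⁻ x in A, W x ∂μ ≤ C * μ (f '' A))
    (n : ℕ) {A : Set X} (hA : MeasurableSet A) :
    ∫⁻ x in A, ∏ t ∈ Finset.range n, W (f^[t] x) ∂μ ≤ C ^ n * μ (f^[n] '' A) := by
  induction n generalizing A with
  | zero => simp
  | succ n ih =>
    have hprod_meas : Measurable fun y => ∏ t ∈ Finset.range n, W (f^[t] y) :=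
      Finset.measurable_prod _ fun t _ => hW.comp (hf.iterate t)
    calc ∫⁻ x in A, ∏ t ∈ Finset.range (n + 1), W (f^[t] x) ∂μ
        = ∫⁻ x in A, W x * ∏ t ∈ Finset.range n, W (f^[t] (f x)) ∂μ := by
          simp only [Finset.prod_range_succ', Function.iterate_succ_apply,
            Function.iterate_zero_apply, mul_comm]
      _ ≤ C * ∫⁻ y in f '' A, ∏ t ∈ Finset.range n, W (f^[t] y) ∂μ :=
          setLIntegral_mul_comp_le hW hf hbound hA hprod_meas
      _ ≤ C * (C ^ n * μ (f^[n] '' (f '' A))) := by gcongr; exact ih (hf_image A hA)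
      _ = C ^ (n + 1) * μ (f^[n + 1] '' A) := by
          rw [pow_succ', mul_assoc, Function.iterate_succ, Set.image_comp]

end WeightedImageBound

theorem mu_n_le_pow_mul_image_general
    {𝕂 : Type} [RCLike 𝕂] {X : Type} [MeasurableSpace X] (μ : Measure X)
    (p : ℝ≥0∞)
    (w : X → 𝕂) (hwm : Measurable w)
    (f : X → X) (hfm : Measurable f)
    (hfim : ∀ A : Set X, MeasurableSet A → MeasurableSet (f '' A))
    (c : ℝ)
    (hbound : ∀ A : Set X, MeasurableSet A →
      ∫⁻ x in A, (‖w x‖₊ : ℝ≥0∞) ^ p.toReal ∂μ ≤ ENNReal.ofReal c * μ (f '' A)) :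
    ∀ A : Set X, MeasurableSet A → ∀ n : ℕ, 0 < n →
      (∫⁻ x in A, ∏ t ∈ Finset.range n, (‖w (f^[t] x)‖₊ : ℝ≥0∞) ^ p.toReal ∂μ) ≤
        ENNReal.ofReal c ^ n * μ (f^[n] '' A) :=
  fun _ hA n _ => setLIntegral_prod_iterate_le (hwm.nnnorm.coe_nnreal_ennreal.pow_const _) hfm
    hfim hbound n hA

theorem mu_n_le_pow_mul_image
    {𝕂 : Type} [RCLike 𝕂] {X : Type} [MeasurableSpace X] (μ : Measure X)
    (p : ℝ≥0∞) (hp1 : 1 ≤ p) (hp2 : p ≠ ⊤)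
    (w : X → 𝕂) (hwm : Measurable w)
    (hw : ∀ φ : X → 𝕂, MemLp φ p μ → MemLp (φ * w) p μ)
    (f : X → X) (hfm : Measurable f)
    (hfim : ∀ A : Set X, MeasurableSet A → MeasurableSet (f '' A))
    (c : ℝ) (hc : 0 < c)
    (hbound : ∀ A : Set X, MeasurableSet A →
      ∫⁻ x in A, (‖w x‖₊ : ℝ≥0∞) ^ p.toReal ∂μ ≤ ENNReal.ofReal c * μ (f '' A)) :
    ∀ A : Set X, MeasurableSet A → ∀ n : ℕ, 0 < n →
      (∫⁻ x in A, ∏ t ∈ Finset.range n, (‖w (f^[t] x)‖₊ : ℝ≥0∞) ^ p.toReal ∂μ) ≤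
        ENNReal.ofReal c ^ n * μ (f^[n] '' A) :=
  mu_n_le_pow_mul_image_general μ p w hwm f hfm hfim c hbound
end
end

section
/- Let p ∈ [1,∞) and let w := (w_n)_{n∈ℕ} be a bounded sequence of scalars in 𝕂. The unilateral weighted backward shift B_w : (x₁,x₂,x₃,…) ∈ ℓ^p(ℕ) ↦ (w₁x₂, w₂x₃, …) ∈ ℓ^p(ℕ) is Li-Yorke chaotic if and only if sup{ |w_i ⋯ w_j| : i, j ∈ ℕ, i ≤ j } = ∞. -/
open Filter Topology MeasureTheory ENNReal

noncomputable section

/-!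
Both directions rest on the formula `(Tⁿ x)ₘ = (wₘ ⋯ wₘ₊ₙ₋₁) xₘ₊ₙ`.

If all products `wᵢ ⋯ wⱼ` are bounded by `K`, then `‖Tⁿ x‖ ≤ max K 1 · ‖(xₘ₊ₙ)ₘ‖ₚ → 0`, so every
orbit converges to `0` and no pair of points is Li–Yorke.

If the products are unbounded, so are the norms of the powers of `T` (which is continuous by the
closed graph theorem), and the Baire argument behind Banach–Steinhaus shows that a residual set of
vectors has an unbounded orbit. Finitely supported vectors are dense and are eventually killed by
`T`, so a residual set of vectors also has orbits coming arbitrarily close to `0`. A vector `x` in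
both sets has `liminf ‖Tⁿ x‖ = 0 < limsup ‖Tⁿ x‖`, and by linearity the line `{c • x | c ∈ ℝ}` is an
uncountable scrambled set.
-/

open Set

section LiYorke

theorem not_liYorkeChaotic_of_tendsto {M : Type*} [PseudoMetricSpace M] {g : M → M} {a : M}
    (h : ∀ x, Tendsto (fun n => g^[n] x) atTop (𝓝 a)) : ¬ LiYorkeChaotic g := by
  rintro ⟨S, hS, hpair⟩
  obtain ⟨x, hx, y, hy, hxy⟩ : S.Nontrivial := by
    by_contra h'
    exact hS (not_nontrivial_iff.mp h').countable
  have hlim : Tendsto (fun n => edist (g^[n] x) (g^[n] y)) atTop (𝓝 0) := by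
    simpa using (h x).edist (h y)
  simpa [hlim.limsup_eq] using (hpair hx hy hxy).2

variable {E F : Type*} [SeminormedAddCommGroup E] [FunLike F E E] [AddMonoidHomClass F E E]

theorem liYorkePair_iff_sub (g : F) (x y : E) :
    LiYorkePair g x y ↔ LiYorkePair g (x - y) 0 := by
  have hsub (n : ℕ) : g^[n] (x - y) = g^[n] x - g^[n] y := iterate_map_sub (g : E →+ E) n x y
  have hzero (n : ℕ) : g^[n] 0 = 0 := iterate_map_zero (g : E →+ E) n
  simp only [LiYorkePair, edist_eq_enorm_sub, hsub, hzero, sub_zero]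

theorem liYorkePair_zero_iff (g : F) (x : E) :
    LiYorkePair g x 0 ↔ liminf (fun n => ‖g^[n] x‖ₑ) atTop = 0 ∧
      0 < limsup (fun n => ‖g^[n] x‖ₑ) atTop := by
  have hzero (n : ℕ) : g^[n] 0 = 0 := iterate_map_zero (g : E →+ E) n
  simp only [LiYorkePair, edist_eq_enorm_sub, hzero, sub_zero]

variable {𝕂 : Type*} [RCLike 𝕂] [NormedSpace 𝕂 E]

theorem LiYorkePair.smul_left {T : E →ₗ[𝕂] E} {x : E} (hx : LiYorkePair T x 0) {c : 𝕂}
    (hc : c ≠ 0) : LiYorkePair T (c • x) 0 := by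
  have hT : ∀ n, T^[n] (c • x) = c • T^[n] x := fun n => by
    rw [← Module.End.pow_apply, map_smul, Module.End.pow_apply]
  rw [liYorkePair_zero_iff] at hx ⊢
  simp only [hT, enorm_smul]
  rw [ENNReal.liminf_const_mul_of_ne_top enorm_ne_top,
    ENNReal.limsup_const_mul_of_ne_top enorm_ne_top, hx.1]
  exact ⟨mul_zero _, ENNReal.mul_pos (enorm_ne_zero.2 hc) hx.2.ne'⟩

theorem liYorkeChaotic_of_liYorkePair_zero {T : E →ₗ[𝕂] E} {x : E} (hx : LiYorkePair T x 0) :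
    LiYorkeChaotic T := by
  have hx₀ : x ≠ 0 := by
    rintro rfl
    simp [LiYorkePair] at hx
  have hinj : Function.Injective fun c : ℝ => (c : 𝕂) • x := fun c d h => by
    simpa using smul_left_injective 𝕂 hx₀ h
  refine ⟨range fun c : ℝ => (c : 𝕂) • x, fun hS => Cardinal.not_countable_real ?_, ?_⟩
  · simpa using hS.preimage hinj
  · rintro _ ⟨c, rfl⟩ _ ⟨d, rfl⟩ hcd
    rw [liYorkePair_iff_sub, ← sub_smul]
    exact hx.smul_left (sub_ne_zero.2 fun h => hcd (congrArg (· • x) h))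

end LiYorke

section Residual

variable {𝕜 E F : Type*} [NontriviallyNormedField 𝕜] [SeminormedAddCommGroup E] [NormedSpace 𝕜 E]
  [SeminormedAddCommGroup F] [NormedSpace 𝕜 F]

theorem dense_setOf_exists_lt_norm_apply {ι : Type*} {g : ι → E →L[𝕜] F}
    (hg : ¬ BddAbove (range fun i => ‖g i‖)) (M : ℝ) : Dense {x | ∃ i, M < ‖g i x‖} := by
  rw [Metric.dense_iff]
  intro x₀ r hr
  by_contra hempty
  have hball : ∀ y ∈ Metric.ball x₀ r, ∀ i, ‖g i y‖ ≤ M := fun y hy i =>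
    not_lt.1 fun h => hempty ⟨y, hy, i, h⟩
  obtain ⟨c, hc⟩ := NormedField.exists_one_lt_norm 𝕜
  refine hg ⟨2 * M * ‖c‖ / r, ?_⟩
  rintro _ ⟨i, rfl⟩
  have hM : 0 ≤ M := (norm_nonneg _).trans (hball x₀ (Metric.mem_ball_self hr) i)
  refine ContinuousLinearMap.opNorm_le_of_shell hr (by positivity) hc fun z hz hzr => ?_
  calc ‖g i z‖ = ‖g i (x₀ + z) - g i x₀‖ := by rw [map_add, add_sub_cancel_left]
    _ ≤ M + M := (norm_sub_le _ _).trans (add_le_add (hball _ (by simpa using hzr) i)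
        (hball _ (Metric.mem_ball_self hr) i))
    _ = 2 * M * ‖c‖ / r * (r / ‖c‖) := by field_simp; ring
    _ ≤ 2 * M * ‖c‖ / r * ‖z‖ := by gcongr

theorem eventually_residual_exists_lt_norm_apply {ι : Type*} {g : ι → E →L[𝕜] F}
    (hg : ¬ BddAbove (range fun i => ‖g i‖)) : ∀ᶠ x in residual E, ∀ M : ℕ, ∃ i, M < ‖g i x‖ := by
  refine eventually_countable_forall.2 fun M => residual_of_dense_open ?_
    (dense_setOf_exists_lt_norm_apply hg M)
  simp only [ofPred_exists]
  exact isOpen_iUnion fun i => isOpen_lt continuous_const (g i).continuous.norm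

end Residual

theorem eventually_residual_exists_ge_enorm_lt {X G : Type*} [TopologicalSpace X]
    [SeminormedAddGroup G] {f : ℕ → X → G} (hf : ∀ n, Continuous (f n))
    (hD : Dense {x | Tendsto (fun n => f n x) atTop (𝓝 0)}) :
    ∀ᶠ x in residual X, ∀ k N : ℕ, ∃ n ≥ N, ‖f n x‖ₑ < (k : ℝ≥0∞)⁻¹ := by
  refine eventually_countable_forall.2 fun k => eventually_countable_forall.2 fun N =>
    residual_of_dense_open ?_ (hD.mono fun x hx => ?_)
  · simp only [ofPred_exists, ofPred_and]
    exact isOpen_iUnion fun n => isOpen_const.inter (isOpen_lt (hf n).enorm continuous_const)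
  · have hsmall := (tendsto_zero_iff_enorm_tendsto_zero.1 hx).eventually
      (gt_mem_nhds (ENNReal.inv_pos.2 (ENNReal.natCast_ne_top k)))
    exact ((eventually_ge_atTop N).and hsmall).exists

theorem liYorkeChaotic_of_dense_tendsto_zero {𝕂 E : Type*} [RCLike 𝕂] [NormedAddCommGroup E]
    [NormedSpace 𝕂 E] [CompleteSpace E] (T : E →L[𝕂] E)
    (hD : Dense {x | Tendsto (fun n => T^[n] x) atTop (𝓝 0)})
    (hT : ¬ BddAbove (range fun n => ‖T ^ n‖)) : LiYorkeChaotic T := by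
  have hpow (n : ℕ) : ⇑(T ^ n) = T^[n] := FunLike.coe_pow_eq_iterate T n
  obtain ⟨x, hsmall, hlarge⟩ := (dense_of_mem_residual ((eventually_residual_exists_ge_enorm_lt
    (fun n => (T ^ n).continuous) (by simpa only [hpow] using hD)).and
    (eventually_residual_exists_lt_norm_apply hT))).nonempty
  simp only [hpow] at hsmall hlarge
  have hliminf : liminf (fun n => ‖T^[n] x‖ₑ) atTop = 0 := by
    refine le_antisymm (le_of_forall_gt_imp_ge_of_dense fun δ hδ => ?_) bot_le
    obtain ⟨k, hk⟩ := ENNReal.exists_inv_nat_lt hδ.ne'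
    refine le_trans (liminf_le_of_frequently_le' (frequently_atTop.2 fun N => ?_)) hk.le
    obtain ⟨n, hn, hsmall⟩ := hsmall k N
    exact ⟨n, hn, hsmall.le⟩
  have hlimsup : 0 < limsup (fun n => ‖T^[n] x‖ₑ) atTop := by
    refine pos_iff_ne_zero.2 fun h0 => ?_
    have hlim : Tendsto (fun n => T^[n] x) atTop (𝓝 0) :=
      tendsto_zero_iff_enorm_tendsto_zero.2 (tendsto_of_liminf_eq_limsup hliminf h0)
    obtain ⟨B, hB⟩ := hlim.norm.bddAbove_range
    obtain ⟨M, hM⟩ := exists_nat_gt B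
    obtain ⟨n, hn⟩ := hlarge M
    exact (hM.trans hn).not_ge (hB ⟨n, rfl⟩)
  exact liYorkeChaotic_of_liYorkePair_zero (T := T.toLinearMap)
    ((liYorkePair_zero_iff _ x).2 ⟨hliminf, hlimsup⟩)

theorem iSup_le_nnnorm_eq_top_iff {E : Type*} [SeminormedAddGroup E] (f : ℕ → ℕ → E) :
    (⨆ (i : ℕ) (j : ℕ) (_ : i ≤ j), (‖f i j‖₊ : ℝ≥0∞)) = ⊤ ↔
      ∀ K : ℝ, ∃ i j, i ≤ j ∧ K < ‖f i j‖ := by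
  simp only [iSup_eq_top, lt_iSup_iff, exists_prop, ← enorm_eq_nnnorm, ← ofReal_norm]
  refine ⟨fun h K => ?_, fun h b hb => ?_⟩
  · obtain ⟨i, j, hij, hK⟩ := h (ENNReal.ofReal K) ofReal_lt_top
    exact ⟨i, j, hij, ((ENNReal.ofReal_lt_ofReal_iff').1 hK).1⟩
  · obtain ⟨i, j, hij, hb'⟩ := h b.toReal
    exact ⟨i, j, hij, (ENNReal.lt_ofReal_iff_toReal_lt hb.ne).2 hb'⟩

theorem lp.tendsto_zero_of_norm_apply_le_shift {E : Type*} [NormedAddCommGroup E] {p : ℝ≥0∞}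
    [Fact (1 ≤ p)] (hp : p ≠ ⊤) {y : ℕ → lp (fun _ : ℕ => E) p} (z : lp (fun _ : ℕ => E) p)
    {D : ℝ} (hD : 0 ≤ D) (h : ∀ n m, ‖y n m‖ ≤ D * ‖z (m + n)‖) : Tendsto y atTop (𝓝 0) := by
  have hp₀ : 0 < p.toReal := ENNReal.toReal_pos (zero_lt_one.trans_le Fact.out).ne' hp
  have htail (n : ℕ) : Summable fun m => ‖z (m + n)‖ ^ p.toReal :=
    ((lp.memℓp z).summable hp₀).comp_injective (add_left_injective n)
  have hrpow : Tendsto (fun n => ‖y n‖ ^ p.toReal) atTop (𝓝 0) := by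
    refine squeeze_zero (fun n => by positivity) (fun n => ?_)
      (by simpa using (tendsto_sum_nat_add fun m => ‖z m‖ ^ p.toReal).const_mul (D ^ p.toReal))
    rw [lp.norm_rpow_eq_tsum hp₀, ← tsum_mul_left]
    refine ((lp.memℓp (y n)).summable hp₀).tsum_le_tsum (fun m => ?_) ((htail n).mul_left _)
    rw [← Real.mul_rpow hD (norm_nonneg _)]
    exact Real.rpow_le_rpow (norm_nonneg _) (h n m) hp₀.le
  have hnorm := hrpow.rpow_const (p := p.toReal⁻¹) (Or.inr (by positivity))
  rw [Real.zero_rpow (inv_ne_zero hp₀.ne')] at hnorm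
  exact tendsto_zero_iff_norm_tendsto_zero.2
    (by simpa only [Real.rpow_rpow_inv (norm_nonneg _) hp₀.ne'] using hnorm)

section WeightedShift

variable {𝕂 : Type*} [RCLike 𝕂] {p : ℝ≥0∞}

def IsBackwardWeightedShift (w : ℕ → 𝕂) (T : lp (fun _ : ℕ => 𝕂) p → lp (fun _ : ℕ => 𝕂) p) :
    Prop :=
  ∀ x n, (T x : ℕ → 𝕂) n = w n * (x : ℕ → 𝕂) (n + 1)

variable {w : ℕ → 𝕂} {T : lp (fun _ : ℕ => 𝕂) p → lp (fun _ : ℕ => 𝕂) p}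

namespace IsBackwardWeightedShift

theorem iterate_apply (hT : IsBackwardWeightedShift w T) (n : ℕ) (x : lp (fun _ : ℕ => 𝕂) p)
    (m : ℕ) :
    (T^[n] x : ℕ → 𝕂) m = (∏ t ∈ Finset.Ico m (m + n), w t) * (x : ℕ → 𝕂) (m + n) := by
  induction n generalizing x with
  | zero => simp
  | succ n ih =>
    rw [Function.iterate_succ_apply, ih, hT, ← add_assoc,
      Finset.prod_Ico_succ_top (Nat.le_add_right m n), mul_assoc]

theorem iterate_eq_zero (hT : IsBackwardWeightedShift w T) {x : lp (fun _ : ℕ => 𝕂) p} {N : ℕ}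
    (hx : ∀ m ≥ N, (x : ℕ → 𝕂) m = 0) {n : ℕ} (hn : N ≤ n) : T^[n] x = 0 := by
  ext m
  rw [hT.iterate_apply, hx (m + n) (by omega), mul_zero, lp.coeFn_zero, Pi.zero_apply]

theorem isLinearMap (hT : IsBackwardWeightedShift w T) : IsLinearMap 𝕂 T where
  map_add x y := by
    ext n
    rw [lp.coeFn_add, Pi.add_apply, hT, hT, hT, lp.coeFn_add, Pi.add_apply, mul_add]
  map_smul c x := by
    ext n
    rw [lp.coeFn_smul, Pi.smul_apply, hT, hT, lp.coeFn_smul, Pi.smul_apply, smul_eq_mul,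
      smul_eq_mul, mul_left_comm]

variable [Fact (1 ≤ p)]

theorem continuous (hT : IsBackwardWeightedShift w T) : Continuous T := by
  refine (IsLinearMap.mk' T hT.isLinearMap).continuous_of_seq_closed_graph fun u x y hu hy => ?_
  have hcoord {v : ℕ → lp (fun _ : ℕ => 𝕂) p} {z : lp (fun _ : ℕ => 𝕂) p}
      (hv : Tendsto v atTop (𝓝 z)) (m : ℕ) :
      Tendsto (fun k => (v k : ℕ → 𝕂) m) atTop (𝓝 ((z : ℕ → 𝕂) m)) :=
    ((lp.lipschitzWith_one_eval p m).continuous.tendsto z).comp hv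
  ext m
  refine tendsto_nhds_unique (hcoord hy m) ?_
  convert (hcoord hu (m + 1)).const_mul (w m) using 2
  · exact hT _ m
  · exact hT x m

def toCLM (hT : IsBackwardWeightedShift w T) :
    lp (fun _ : ℕ => 𝕂) p →L[𝕂] lp (fun _ : ℕ => 𝕂) p :=
  ⟨IsLinearMap.mk' T hT.isLinearMap, hT.continuous⟩

@[simp]
theorem coe_toCLM (hT : IsBackwardWeightedShift w T) : ⇑hT.toCLM = T := rfl

theorem norm_prod_Icc_le_norm_pow (hT : IsBackwardWeightedShift w T) {i j : ℕ} (hij : i ≤ j) :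
    ‖∏ t ∈ Finset.Icc i j, w t‖ ≤ ‖hT.toCLM ^ (j + 1 - i)‖ := by
  have hp : 0 < p := zero_lt_one.trans_le Fact.out
  set e : lp (fun _ : ℕ => 𝕂) p := lp.single p (j + 1) 1
  have he : ‖e‖ = 1 := by simp [e, lp.norm_single hp]
  have hcoord : (T^[j + 1 - i] e : ℕ → 𝕂) i = ∏ t ∈ Finset.Icc i j, w t := by
    rw [hT.iterate_apply, Nat.add_sub_cancel' (by omega), lp.single_apply_self, mul_one,
      Finset.Ico_add_one_right_eq_Icc]
  calc ‖∏ t ∈ Finset.Icc i j, w t‖ ≤ ‖T^[j + 1 - i] e‖ :=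
        hcoord ▸ lp.norm_apply_le_norm hp.ne' _ i
    _ = ‖(hT.toCLM ^ (j + 1 - i)) e‖ := by rw [FunLike.coe_pow_eq_iterate, coe_toCLM]
    _ ≤ ‖hT.toCLM ^ (j + 1 - i)‖ := by simpa [he] using (hT.toCLM ^ (j + 1 - i)).le_opNorm e

theorem not_bddAbove_norm_pow (hT : IsBackwardWeightedShift w T)
    (hw : ∀ K : ℝ, ∃ i j, i ≤ j ∧ K < ‖∏ t ∈ Finset.Icc i j, w t‖) :
    ¬ BddAbove (range fun n => ‖hT.toCLM ^ n‖) := by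
  rintro ⟨B, hB⟩
  obtain ⟨i, j, hij, hlt⟩ := hw B
  exact hlt.not_ge ((hT.norm_prod_Icc_le_norm_pow hij).trans (hB ⟨_, rfl⟩))

theorem dense_setOf_tendsto_zero (hT : IsBackwardWeightedShift w T) (hp : p ≠ ⊤) :
    Dense {x | Tendsto (fun n => T^[n] x) atTop (𝓝 0)} := by
  intro x
  refine mem_closure_of_tendsto (lp.hasSum_single hp x).tendsto_sum_nat
    (Eventually.of_forall fun N => tendsto_atTop_of_eventually_const (i₀ := N) fun n hn => ?_)
  refine hT.iterate_eq_zero (fun m hm => ?_) hn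
  rw [lp.coeFn_sum, Finset.sum_apply]
  exact Finset.sum_eq_zero fun i hi =>
    lp.single_apply_ne p i _ (by simp only [Finset.mem_range] at hi; omega)

theorem tendsto_iterate_zero (hT : IsBackwardWeightedShift w T) (hp : p ≠ ⊤) {K : ℝ}
    (hK : ∀ i j, i ≤ j → ‖∏ t ∈ Finset.Icc i j, w t‖ ≤ K) (x : lp (fun _ : ℕ => 𝕂) p) :
    Tendsto (fun n => T^[n] x) atTop (𝓝 0) := by
  have hprod (m n : ℕ) : ‖∏ t ∈ Finset.Ico m (m + n), w t‖ ≤ max K 1 := by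
    rcases n with _ | n
    · simp
    · rw [← add_assoc, Finset.Ico_add_one_right_eq_Icc]
      exact (hK m (m + n) (Nat.le_add_right m n)).trans (le_max_left K 1)
  refine lp.tendsto_zero_of_norm_apply_le_shift hp x (zero_le_one.trans (le_max_right K 1))
    fun n m => ?_
  rw [hT.iterate_apply, norm_mul]
  exact mul_le_mul_of_nonneg_right (hprod m n) (norm_nonneg _)

end IsBackwardWeightedShift

end WeightedShift

theorem unilateral_shift_lp_liYorke_iff_general
    {𝕂 : Type} [RCLike 𝕂] (p : ℝ≥0∞) [Fact (1 ≤ p)] (hp2 : p ≠ ⊤)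
    (w : ℕ → 𝕂)
    (T : lp (fun _ : ℕ => 𝕂) p → lp (fun _ : ℕ => 𝕂) p)
    (hT : ∀ (x : lp (fun _ : ℕ => 𝕂) p) (n : ℕ),
      (T x : ℕ → 𝕂) n = w n * (x : ℕ → 𝕂) (n + 1)) :
    LiYorkeChaotic T ↔
      (⨆ (i : ℕ) (j : ℕ) (_ : i ≤ j), (‖∏ t ∈ Finset.Icc i j, w t‖₊ : ℝ≥0∞)) = ⊤ := by
  have hshift : IsBackwardWeightedShift w T := hT
  rw [iSup_le_nnnorm_eq_top_iff fun i j => ∏ t ∈ Finset.Icc i j, w t]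
  refine ⟨fun hchaos K => ?_, fun hw => ?_⟩
  · by_contra! hK
    exact not_liYorkeChaotic_of_tendsto (hshift.tendsto_iterate_zero hp2 hK) hchaos
  · rw [← hshift.coe_toCLM]
    exact liYorkeChaotic_of_dense_tendsto_zero _ (hshift.dense_setOf_tendsto_zero hp2)
      (hshift.not_bddAbove_norm_pow hw)

theorem unilateral_shift_lp_liYorke_iff
    {𝕂 : Type} [RCLike 𝕂] (p : ℝ≥0∞) [Fact (1 ≤ p)] (hp2 : p ≠ ⊤)
    (w : ℕ → 𝕂) (hwb : ∃ C : ℝ, ∀ n, ‖w n‖ ≤ C)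
    (T : lp (fun _ : ℕ => 𝕂) p → lp (fun _ : ℕ => 𝕂) p)
    (hT : ∀ (x : lp (fun _ : ℕ => 𝕂) p) (n : ℕ),
      (T x : ℕ → 𝕂) n = w n * (x : ℕ → 𝕂) (n + 1)) :
    LiYorkeChaotic T ↔
      (⨆ (i : ℕ) (j : ℕ) (_ : i ≤ j), (‖∏ t ∈ Finset.Icc i j, w t‖₊ : ℝ≥0∞)) = ⊤ :=
  unilateral_shift_lp_liYorke_iff_general p hp2 w T hT
end
end

section
/- Let T be a continuous linear operator on a Fréchet space X and let NS(T) := { x ∈ X : the sequence (Tⁿx)_{n∈ℕ} has a subsequence converging to zero }. Then exactly one of the following holds: (a) the set of irregular vectors of T is residual in X; (b) lim_{n→∞} Tⁿx = 0 for every x ∈ X; (c) NS(T) is not dense in X. Moreover: (A) if NS(T) is not closed in X, then T is Li-Yorke chaotic; and (B) if X is separable and NS(T) is dense and not closed in X, then T is densely Li-Yorke chaotic. -/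
open Filter Topology MeasureTheory ENNReal

noncomputable section

/-- The set of vectors whose orbit under `g` has a subsequence converging to zero. -/
def NSset {X : Type*} [TopologicalSpace X] [Zero X] (g : X → X) : Set X :=
  {x | ∃ n : ℕ → ℕ, StrictMono n ∧ Tendsto (fun j => g^[n j] x) atTop (nhds 0)}

/-- An irregular vector: the orbit is unbounded (in the von Neumann sense) but has a
subsequence converging to zero. -/
def IrregularVector (𝕂 : Type*) {X : Type*} [NormedField 𝕂] [AddCommGroup X]
    [Module 𝕂 X] [TopologicalSpace X] (g : X → X) (x : X) : Prop :=
  ¬ Bornology.IsVonNBounded 𝕂 (Set.range fun n : ℕ => g^[n] x) ∧ x ∈ NSset g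


/-!
Let `D` be the set of vectors whose orbit tends to `0`. The set `NS(T)` is a `Gδ`, hence residual
as soon as it is dense. If the vectors with bounded orbit form a non-meagre set, a Baire category
argument makes the iterates `Tⁿ` equicontinuous at `0`; then `NS(T) ⊆ D` and `D` is closed, so a
dense `NS(T)` forces every orbit to tend to `0`. This gives the trichotomy, and shows that when
`NS(T)` is dense but not closed, the semi-irregular vectors `NS(T) \ D` form a residual set.
Applying the same argument to `T` restricted to the closure of `D` shows that `NS(T) = D` forces
`NS(T)` to be closed. So if `NS(T)` is not closed there is a semi-irregular vector `z`, and the line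
`ℝ z` is scrambled: by translation invariance of the metric, `(x, y)` is a Li-Yorke pair as soon as
`x - y` is semi-irregular. In the separable case, a recursion of length `ω₁` that picks each new
point in a prescribed basic open set, with all its differences to earlier points in the residual
set of semi-irregular vectors, yields a dense uncountable scrambled set.
-/

theorem iterate_map_smul {R M F : Type*} [SMul R M] [FunLike F M M] [MulActionHomClass F R M M]
    (f : F) (n : ℕ) (c : R) (x : M) : (⇑f)^[n] (c • x) = c • (⇑f)^[n] x :=
  (Function.Semiconj.iterate_right (fun y => (map_smul f c y).symm) n x).symm

theorem isGδ_setOf_mapClusterPt {X Y : Type*} [TopologicalSpace X] [TopologicalSpace Y]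
    [FirstCountableTopology Y] {f : ℕ → X → Y} (hf : ∀ n, Continuous (f n)) (y : Y) :
    IsGδ {x | MapClusterPt y atTop fun n => f n x} := by
  obtain ⟨U, hU, hbasis⟩ := (nhds_basis_opens y).exists_antitone_subbasis
  have hset : {x | MapClusterPt y atTop fun n => f n x} = ⋂ k, ⋂ m, ⋃ n ≥ m, f n ⁻¹' U k := by
    ext x
    simp [hbasis.toHasBasis.mapClusterPt_iff_frequently, frequently_atTop]
  rw [hset]
  exact .iInter fun k => .iInter fun m => (isOpen_biUnion fun n _ => (hU k).2.preimage (hf n)).isGδ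

theorem NSset_eq_setOf_mapClusterPt {X : Type*} [TopologicalSpace X] [FirstCountableTopology X]
    [Zero X] (g : X → X) : NSset g = {x | MapClusterPt 0 atTop fun n => g^[n] x} := by
  ext x
  exact ⟨fun ⟨φ, hφ, h⟩ => .of_comp hφ.tendsto_atTop h.mapClusterPt, fun h => h.tendsto_subseq⟩

theorem NSset_mem_residual {X : Type*} [TopologicalSpace X] [FirstCountableTopology X] [Zero X]
    {g : X → X} (hg : Continuous g) (hd : Dense (NSset g)) : NSset g ∈ residual X := by
  refine residual_of_dense_Gδ ?_ hd
  rw [NSset_eq_setOf_mapClusterPt]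
  exact isGδ_setOf_mapClusterPt (fun n => hg.iterate n) 0

theorem tendsto_iterate_of_mem_NSset_of_equicontinuous {X : Type*} [TopologicalSpace X] [Zero X]
    {g : X → X} (hE : ∀ V ∈ 𝓝 (0 : X), ∀ᶠ u in 𝓝 0, ∀ n, g^[n] u ∈ V) {x : X} (hx : x ∈ NSset g) :
    Tendsto (fun n => g^[n] x) atTop (𝓝 0) := by
  obtain ⟨φ, -, hφ⟩ := hx
  rw [tendsto_def]
  intro V hV
  obtain ⟨j, hj⟩ := (hφ.eventually (hE V hV)).exists
  filter_upwards [eventually_ge_atTop (φ j)] with n hn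
  change g^[n] x ∈ V
  rw [← Nat.sub_add_cancel hn, Function.iterate_add_apply]
  exact hj _

theorem exists_not_countable_pairwise_of_countable_extension {α : Type*} {r : α → α → Prop}
    (hsymm : ∀ x y, r x y → r y x) (hirrefl : ∀ x, ¬ r x x) (U : ℕ → Set α)
    (hext : ∀ m (C : Set α), C.Countable → ∃ y ∈ U m, ∀ c ∈ C, r y c) :
    ∃ S : Set α, (∀ m, (U m ∩ S).Nonempty) ∧ ¬ S.Countable ∧ S.Pairwise r := by
  choose pick hpickU hpickr using hext
  -- Transfinite recursion along `ω₁`, whose initial segments are countable.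
  let ι := (Cardinal.aleph.{0} 1).ord.ToType
  have hι : Uncountable ι := by
    rw [← not_countable_iff, ← Cardinal.mk_le_aleph0_iff, Cardinal.mk_ord_toType, not_le]
    exact Cardinal.aleph0_lt_aleph_one
  have hIio (i : ι) : Countable (Set.Iio i) := by
    have := Cardinal.mk_Iio_lt i (by rw [Cardinal.mk_ord_toType, Ordinal.type_toType])
    rw [Cardinal.mk_ord_toType, Cardinal.lt_aleph_one_iff] at this
    exact Cardinal.mk_le_aleph0_iff.1 this
  obtain ⟨b, hb⟩ : ∃ b : ι → ℕ, b.Surjective :=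
    ⟨_, Function.invFun_surjective (Infinite.natEmbedding ι).injective⟩
  let F : ι → α := IsWellFounded.fix (· < ·) fun i prev =>
    pick (b i) (Set.range fun j : Set.Iio i => prev j j.2) (@Set.countable_range _ _ (hIio i) _)
  have hF (i : ι) : F i ∈ U (b i) ∧ ∀ j < i, r (F i) (F j) := by
    rw [show F i = _ from IsWellFounded.fix_eq _ _ i]
    exact ⟨hpickU .., fun j hj => hpickr _ _ _ _ ⟨⟨j, hj⟩, rfl⟩⟩
  have hr {i j : ι} (hij : i ≠ j) : r (F i) (F j) := by
    rcases hij.lt_or_gt with h | h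
    exacts [hsymm _ _ ((hF j).2 i h), (hF i).2 j h]
  have hinj : F.Injective := fun i j h =>
    by_contra fun hij => hirrefl (F j) (by simpa only [h] using hr hij)
  refine ⟨Set.range F, fun m => ?_, fun hc => ?_, ?_⟩
  · obtain ⟨i, rfl⟩ := hb m
    exact ⟨F i, (hF i).1, i, rfl⟩
  · exact not_countable (Set.countable_univ_iff.1 (by simpa using hc.preimage hinj))
  · rintro _ ⟨i, rfl⟩ _ ⟨j, rfl⟩ hne
    exact hr (ne_of_apply_ne F hne)

theorem exists_dense_not_countable_pairwise {α : Type*} [TopologicalSpace α] [BaireSpace α]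
    [SecondCountableTopology α] [Nonempty α] {r : α → α → Prop} (hsymm : ∀ x y, r x y → r y x)
    (hirrefl : ∀ x, ¬ r x x) (hres : ∀ x, {y | r y x} ∈ residual α) :
    ∃ S : Set α, Dense S ∧ ¬ S.Countable ∧ S.Pairwise r := by
  obtain ⟨B, hBc, hB0, hB⟩ := TopologicalSpace.exists_countable_basis α
  obtain ⟨U, rfl⟩ := hBc.exists_eq_range <| by
    obtain ⟨x⟩ := ‹Nonempty α›
    obtain ⟨V, hV, -⟩ := hB.exists_subset_of_mem_open (Set.mem_univ x) isOpen_univ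
    exact ⟨V, hV⟩
  obtain ⟨S, hSU, hS⟩ := exists_not_countable_pairwise_of_countable_extension hsymm hirrefl U
    fun m C hC => by
      have hUm : (U m).Nonempty := Set.nonempty_iff_ne_empty.2 fun h => hB0 ⟨m, h⟩
      obtain ⟨y, hyU, hy⟩ := (dense_of_mem_residual ((countable_bInter_mem hC).2 fun c _ =>
        hres c)).inter_open_nonempty (U m) (hB.isOpen ⟨m, rfl⟩) hUm
      exact ⟨y, hyU, Set.mem_iInter₂.1 hy⟩
  exact ⟨S, hB.dense_iff.2 fun _ ⟨m, hm⟩ _ => hm ▸ hSU m, hS⟩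

def SemiIrregularVector {X : Type*} [TopologicalSpace X] [Zero X] (g : X → X) (x : X) : Prop :=
  x ∈ NSset g ∧ ¬ Tendsto (fun n => g^[n] x) atTop (𝓝 0)

section LiYorke

variable {M : Type*} [PseudoMetricSpace M]

theorem liminf_edist_eq_zero_of_mapClusterPt {u : ℕ → M} {y : M} (h : MapClusterPt y atTop u) :
    liminf (fun n => edist (u n) y) atTop = 0 :=
  nonpos_iff_eq_zero.1 <| by
    have hc : Continuous fun x => edist x y := continuous_id.edist continuous_const
    simpa [Function.comp_def] using (h.continuousAt_comp hc.continuousAt).liminf_le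

theorem limsup_edist_pos_of_not_tendsto {u : ℕ → M} {y : M} (h : ¬ Tendsto u atTop (𝓝 y)) :
    0 < limsup (fun n => edist (u n) y) atTop :=
  pos_iff_ne_zero.2 fun h0 => h <|
    tendsto_iff_edist_tendsto_0.2 (tendsto_of_le_liminf_of_limsup_le zero_le h0.le)

theorem liYorkePair_comm {g : M → M} {x y : M} : LiYorkePair g x y ↔ LiYorkePair g y x := by
  simp only [LiYorkePair, edist_comm]

theorem not_liYorkePair_self (g : M → M) (x : M) : ¬ LiYorkePair g x x := by
  simp [LiYorkePair]

end LiYorke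

theorem liYorkePair_of_semiIrregularVector_sub {X F : Type*} [AddCommGroup X] [PseudoMetricSpace X]
    [FunLike F X X] [AddMonoidHomClass F X X] (hinv : ∀ x y z : X, dist (x + z) (y + z) = dist x y)
    (g : F) {a b : X} (h : SemiIrregularVector g (a - b)) : LiYorkePair g a b := by
  have hedist (n : ℕ) : edist (g^[n] a) (g^[n] b) = edist (g^[n] (a - b)) 0 := by
    rw [edist_dist, edist_dist, iterate_map_sub, ← hinv _ 0 ((⇑g)^[n] b), sub_add_cancel, zero_add]
  simp only [LiYorkePair, hedist]
  refine ⟨liminf_edist_eq_zero_of_mapClusterPt ?_, limsup_edist_pos_of_not_tendsto h.2⟩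
  have hNS := h.1
  rwa [NSset_eq_setOf_mapClusterPt] at hNS

section TopologicalVectorSpace

variable {𝕂 X : Type*} [NontriviallyNormedField 𝕂] [AddCommGroup X] [Module 𝕂 X]
  [TopologicalSpace X] [IsTopologicalAddGroup X] [ContinuousSMul 𝕂 X] (T : X →L[𝕂] X)

def tendstoZeroSubmodule : Submodule 𝕂 X where
  carrier := {x | Tendsto (fun n => T^[n] x) atTop (𝓝 0)}
  add_mem' {a b} ha hb := by simpa [iterate_map_add] using ha.add hb
  zero_mem' := by simpa [iterate_map_zero] using tendsto_const_nhds
  smul_mem' c x hx := by simpa [iterate_map_smul] using hx.const_smul c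

theorem mem_tendstoZeroSubmodule {x : X} :
    x ∈ tendstoZeroSubmodule T ↔ Tendsto (fun n => T^[n] x) atTop (𝓝 0) :=
  Iff.rfl

theorem mapsTo_tendstoZeroSubmodule :
    Set.MapsTo T (tendstoZeroSubmodule T) (tendstoZeroSubmodule T) := fun x hx => by
  simpa only [SetLike.mem_coe, mem_tendstoZeroSubmodule, Function.comp_def,
    ← Function.iterate_succ_apply] using Tendsto.comp hx (tendsto_add_atTop_nat 1)

theorem SemiIrregularVector.smul {x : X} (h : SemiIrregularVector T x) {c : 𝕂} (hc : c ≠ 0) :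
    SemiIrregularVector T (c • x) := by
  obtain ⟨⟨φ, hφ, hx⟩, hD⟩ := h
  refine ⟨⟨φ, hφ, by simpa [iterate_map_smul] using hx.const_smul c⟩, fun h => hD ?_⟩
  exact ((tendstoZeroSubmodule T).smul_mem_iff hc).1 h

theorem SemiIrregularVector.ne_zero {x : X} (h : SemiIrregularVector T x) : x ≠ 0 := by
  rintro rfl
  exact h.2 (tendstoZeroSubmodule T).zero_mem

theorem isClosed_tendstoZeroSubmodule_of_equicontinuous
    (hE : ∀ V ∈ 𝓝 (0 : X), ∀ᶠ u in 𝓝 0, ∀ n, T^[n] u ∈ V) :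
    IsClosed (tendstoZeroSubmodule T : Set X) := by
  refine isClosed_of_closure_subset fun x hx => tendsto_def.2 fun V hV => ?_
  obtain ⟨V₁, hV₁, hV₁V⟩ := exists_nhds_zero_half hV
  have hnear : ∀ᶠ y in 𝓝 x, ∀ n, T^[n] (x - y) ∈ V₁ :=
    (continuous_const.sub continuous_id).tendsto' x 0 (sub_self x) (hE V₁ hV₁)
  obtain ⟨y, hy, hxy⟩ := ((mem_closure_iff_frequently.1 hx).and_eventually hnear).exists
  filter_upwards [Tendsto.eventually_mem hy hV₁] with n hn
  change T^[n] x ∈ V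
  rw [← sub_add_cancel x y, iterate_map_add]
  exact hV₁V _ (hxy n) _ hn

theorem eventually_forall_iterate_mem_of_not_isMeagre
    (hB : ¬ IsMeagre {x | Bornology.IsVonNBounded 𝕂 (Set.range fun n => T^[n] x)})
    {V : Set X} (hV : V ∈ 𝓝 0) : ∀ᶠ u in 𝓝 0, ∀ n, T^[n] u ∈ V := by
  obtain ⟨V₁, hV₁, hV₁V⟩ := exists_nhds_zero_half hV
  obtain ⟨W, ⟨hW, hWc, hWb⟩, hWV₁⟩ := (nhds_basis_closed_balanced 𝕂 X).mem_iff.1 hV₁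
  obtain ⟨a, ha⟩ := NormedField.exists_one_lt_norm 𝕂
  have ha0 : a ≠ 0 := norm_pos_iff.1 (one_pos.trans ha)
  -- The sets `F k` of points whose orbit stays in `a ^ k • W` cover the bounded orbits, so one of
  -- them has interior; differences of its points fill a neighbourhood of `0` mapped into `W - W`.
  let F : ℕ → Set X := fun k => {x | ∀ n, T^[n] ((a ^ k)⁻¹ • x) ∈ W}
  have hFc (k : ℕ) : IsClosed (F k) := by
    simp only [F, Set.ofPred_forall]
    exact isClosed_iInter fun n =>
      hWc.preimage ((T.continuous.iterate n).comp (continuous_const_smul _))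
  have hBF : {x | Bornology.IsVonNBounded 𝕂 (Set.range fun n => T^[n] x)} ⊆ ⋃ k, F k := by
    intro x hx
    obtain ⟨r, hr⟩ := absorbs_iff_norm.1 (hx hW)
    obtain ⟨k, hk⟩ := pow_unbounded_of_one_lt r ha
    refine Set.mem_iUnion.2 ⟨k, fun n => ?_⟩
    rw [iterate_map_smul, ← Set.mem_smul_set_iff_inv_smul_mem₀ (pow_ne_zero k ha0)]
    exact hr (a ^ k) (by rw [norm_pow]; exact hk.le) ⟨n, rfl⟩
  obtain ⟨k, x₀, hx₀⟩ : ∃ k, (interior (F k)).Nonempty := by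
    by_contra! h
    exact hB ((isMeagre_iUnion fun k => ((hFc k).isNowhereDense_iff.2 (h k)).isMeagre).mono hBF)
  have hO : {u | x₀ + u ∈ F k} ∈ 𝓝 (0 : X) :=
    (continuous_const_add x₀).tendsto' 0 x₀ (add_zero x₀) (mem_interior_iff_mem_nhds.1 hx₀)
  refine mem_of_superset
    ((set_smul_mem_nhds_zero_iff (inv_ne_zero (pow_ne_zero k ha0))).2 hO) ?_
  rintro _ ⟨u, hu, rfl⟩ n
  change T^[n] ((a ^ k)⁻¹ • u) ∈ V
  have hsub : (a ^ k)⁻¹ • u = (a ^ k)⁻¹ • (x₀ + u) - (a ^ k)⁻¹ • x₀ := by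
    rw [smul_add, add_sub_cancel_left]
  rw [hsub, iterate_map_sub, sub_eq_add_neg]
  exact hV₁V _ (hWV₁ (hu n)) _ (hWV₁ (hWb.neg_mem_iff.2 (interior_subset hx₀ n)))


theorem tendsto_iterate_of_dense_of_not_isMeagre (hd : Dense (NSset T))
    (hB : ¬ IsMeagre {x | Bornology.IsVonNBounded 𝕂 (Set.range fun n => T^[n] x)}) (x : X) :
    Tendsto (fun n => T^[n] x) atTop (𝓝 0) :=
  have hE := fun V (hV : V ∈ 𝓝 (0 : X)) => eventually_forall_iterate_mem_of_not_isMeagre T hB hV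
  closure_minimal (fun _ => tendsto_iterate_of_mem_NSset_of_equicontinuous hE)
    (isClosed_tendstoZeroSubmodule_of_equicontinuous T hE) (hd x)

theorem isMeagre_setOf_isVonNBounded (hd : Dense (NSset T))
    (h : ¬ ∀ x, Tendsto (fun n => T^[n] x) atTop (𝓝 0)) :
    IsMeagre {x | Bornology.IsVonNBounded 𝕂 (Set.range fun n => T^[n] x)} :=
  not_not.1 fun hB => h (tendsto_iterate_of_dense_of_not_isMeagre T hd hB)

variable [FirstCountableTopology X]

theorem setOf_irregularVector_mem_residual (hd : Dense (NSset T))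
    (h : ¬ ∀ x, Tendsto (fun n => T^[n] x) atTop (𝓝 0)) :
    {x | IrregularVector 𝕂 T x} ∈ residual X :=
  inter_mem (isMeagre_setOf_isVonNBounded T hd h) (NSset_mem_residual T.continuous hd)

theorem tendsto_iterate_of_dense_of_NSset_subset [BaireSpace X] (hd : Dense (NSset T))
    (hsub : NSset T ⊆ tendstoZeroSubmodule T) (x : X) :
    Tendsto (fun n => T^[n] x) atTop (𝓝 0) := by
  refine tendsto_iterate_of_dense_of_not_isMeagre T hd (fun hB => ?_) x
  refine not_isMeagre_of_mem_residual (mem_of_superset (NSset_mem_residual T.continuous hd) ?_) hB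
  exact fun _ hy => Tendsto.isVonNBounded_range 𝕂 (hsub hy)

theorem setOf_semiIrregularVector_mem_residual (hd : Dense (NSset T))
    (hnc : ¬ IsClosed (NSset T)) : {x | SemiIrregularVector T x} ∈ residual X := by
  have hall : ¬ ∀ x, Tendsto (fun n => T^[n] x) atTop (𝓝 0) := fun hall =>
    hnc <| by
      have : NSset T = Set.univ := Set.eq_univ_of_forall fun x => ⟨id, strictMono_id, hall x⟩
      exact this ▸ isClosed_univ
  exact inter_mem (NSset_mem_residual T.continuous hd) <|
    (isMeagre_setOf_isVonNBounded T hd hall).mono fun _ hx => Tendsto.isVonNBounded_range 𝕂 hx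

end TopologicalVectorSpace

section Metric

variable {𝕂 X : Type*} [NontriviallyNormedField 𝕂] [AddCommGroup X] [Module 𝕂 X]
  [PseudoMetricSpace X] [IsTopologicalAddGroup X] [ContinuousSMul 𝕂 X] (T : X →L[𝕂] X)

theorem isClosed_NSset_of_subset [CompleteSpace X] (hsub : NSset T ⊆ tendstoZeroSubmodule T) :
    IsClosed (NSset T) := by
  set D := tendstoZeroSubmodule T
  set Y := D.topologicalClosure
  let S : Y →L[𝕂] Y := (T.comp Y.subtypeL).codRestrict Y fun y =>
    (mapsTo_tendstoZeroSubmodule T).closure T.continuous y.2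
  have hS (n : ℕ) (y : Y) : ((S^[n] y : Y) : X) = T^[n] y :=
    Function.Semiconj.iterate_right (f := Subtype.val) (fun _ => rfl) n y
  have htendsto {l : Filter ℕ} (m : ℕ → ℕ) (y : Y) :
      Tendsto (fun j => S^[m j] y) l (𝓝 0) ↔ Tendsto (fun j => T^[m j] y) l (𝓝 0) := by
    rw [Topology.IsInducing.subtypeVal.tendsto_nhds_iff]
    simp only [Function.comp_def, hS, Submodule.coe_zero]
  have hNS (y : Y) : y ∈ NSset S ↔ (y : X) ∈ NSset T := by
    simp only [NSset, Set.mem_ofPred_eq, htendsto]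
  have : CompleteSpace Y := D.isClosed_topologicalClosure.completeSpace_coe
  -- On the closure `Y` of `D`, the set `NSset S` is dense and contained in `D`, so `Y = D`.
  have hdense : Dense (NSset S) := by
    refine Subtype.dense_iff.2 (closure_mono fun x hx => ?_)
    exact ⟨⟨x, D.le_topologicalClosure hx⟩, (hNS _).2 ⟨id, strictMono_id, hx⟩, rfl⟩
  have hY (y : Y) : (y : X) ∈ D := by
    have := tendsto_iterate_of_dense_of_NSset_subset S hdense (fun y hy => ?_) y
    · exact (htendsto id y).1 this
    · exact (htendsto id y).2 (hsub ((hNS y).1 hy))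
  have hDc : IsClosed (D : Set X) := isClosed_of_closure_subset fun x hx => hY ⟨x, hx⟩
  rwa [hsub.antisymm fun x hx => ⟨id, strictMono_id, hx⟩]

theorem exists_semiIrregularVector_of_not_isClosed [CompleteSpace X] (h : ¬ IsClosed (NSset T)) :
    ∃ z, SemiIrregularVector T z := by
  by_contra! hz
  exact h (isClosed_NSset_of_subset T fun x hx => not_not.1 fun hD => hz x ⟨hx, hD⟩)

theorem denselyLiYorkeChaotic_of_dense_of_not_isClosed [CompleteSpace X]
    [TopologicalSpace.SeparableSpace X] (hinv : ∀ x y z : X, dist (x + z) (y + z) = dist x y)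
    (hd : Dense (NSset T)) (hnc : ¬ IsClosed (NSset T)) : DenselyLiYorkeChaotic T := by
  have hR := setOf_semiIrregularVector_mem_residual T hd hnc
  refine exists_dense_not_countable_pairwise (fun _ _ => liYorkePair_comm.1)
    (not_liYorkePair_self T) fun x => ?_
  rw [← (Homeomorph.subRight x).residual_map_eq] at hR
  exact mem_of_superset hR fun y hy => liYorkePair_of_semiIrregularVector_sub hinv T hy

end Metric

theorem liYorkeChaotic_of_semiIrregularVector {𝕂 X : Type*} [RCLike 𝕂] [AddCommGroup X]
    [Module 𝕂 X] [PseudoMetricSpace X] [IsTopologicalAddGroup X] [ContinuousSMul 𝕂 X]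
    (hinv : ∀ x y z : X, dist (x + z) (y + z) = dist x y) (T : X →L[𝕂] X) {z : X}
    (hz : SemiIrregularVector T z) : LiYorkeChaotic T := by
  have hinj : (fun r : ℝ => (r : 𝕂) • z).Injective := fun r s h =>
    RCLike.ofReal_injective (smul_left_injective 𝕂 (hz.ne_zero T) h)
  refine ⟨Set.range fun r : ℝ => (r : 𝕂) • z, fun hc => ?_, ?_⟩
  · exact Cardinal.not_countable_real (by simpa using hc.preimage hinj)
  · rintro _ ⟨r, rfl⟩ _ ⟨s, rfl⟩ hne
    refine liYorkePair_of_semiIrregularVector_sub hinv T ?_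
    rw [← sub_smul, ← RCLike.ofReal_sub]
    exact hz.smul T (RCLike.ofReal_ne_zero.2 (sub_ne_zero.2 fun h => hne (h ▸ rfl)))

theorem frechet_trichotomy_and_liYorke_general
    {𝕂 X : Type} [RCLike 𝕂] [AddCommGroup X] [Module 𝕂 X]
    [MetricSpace X] [CompleteSpace X] [ContinuousAdd X] [ContinuousSMul 𝕂 X]
    (hinv : ∀ x y z : X, dist (x + z) (y + z) = dist x y)
    (T : X →L[𝕂] X) :
    ((({x | IrregularVector 𝕂 (⇑T) x} ∈ residual X) ∧
        ¬ (∀ x : X, Tendsto (fun n : ℕ => (⇑T)^[n] x) atTop (nhds 0)) ∧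
        Dense (NSset (⇑T))) ∨
      (¬ ({x | IrregularVector 𝕂 (⇑T) x} ∈ residual X) ∧
        (∀ x : X, Tendsto (fun n : ℕ => (⇑T)^[n] x) atTop (nhds 0)) ∧
        Dense (NSset (⇑T))) ∨
      (¬ ({x | IrregularVector 𝕂 (⇑T) x} ∈ residual X) ∧
        ¬ (∀ x : X, Tendsto (fun n : ℕ => (⇑T)^[n] x) atTop (nhds 0)) ∧
        ¬ Dense (NSset (⇑T)))) ∧
    (¬ IsClosed (NSset (⇑T)) → LiYorkeChaotic (⇑T)) ∧
    (TopologicalSpace.SeparableSpace X → Dense (NSset (⇑T)) → ¬ IsClosed (NSset (⇑T)) →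
      DenselyLiYorkeChaotic (⇑T)) := by
  have : ContinuousNeg X := .of_continuousConstSMul 𝕂 X
  have : IsTopologicalAddGroup X := {}
  refine ⟨?_, fun hnc => ?_, fun _ hd hnc =>
    denselyLiYorkeChaotic_of_dense_of_not_isClosed T hinv hd hnc⟩
  · by_cases hall : ∀ x : X, Tendsto (fun n => T^[n] x) atTop (𝓝 0)
    · refine Or.inr (Or.inl ⟨fun hres => ?_, hall, ?_⟩)
      · obtain ⟨x, hx⟩ := (dense_of_mem_residual hres).nonempty
        exact hx.1 ((hall x).isVonNBounded_range 𝕂)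
      · exact dense_univ.mono fun x _ => ⟨id, strictMono_id, hall x⟩
    by_cases hd : Dense (NSset T)
    · exact Or.inl ⟨setOf_irregularVector_mem_residual T hd hall, hall, hd⟩
    · refine Or.inr (Or.inr ⟨fun hres => hd ?_, hall, hd⟩)
      exact (dense_of_mem_residual hres).mono fun _ hx => hx.2
  · obtain ⟨z, hz⟩ := exists_semiIrregularVector_of_not_isClosed T hnc
    exact liYorkeChaotic_of_semiIrregularVector hinv T hz

theorem frechet_trichotomy_and_liYorke
    {𝕂 X : Type} [RCLike 𝕂] [AddCommGroup X] [Module 𝕂 X]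
    [MetricSpace X] [CompleteSpace X] [ContinuousAdd X] [ContinuousSMul 𝕂 X]
    [Module ℝ X] [IsScalarTower ℝ 𝕂 X] [LocallyConvexSpace ℝ X]
    (hinv : ∀ x y z : X, dist (x + z) (y + z) = dist x y)
    (T : X →L[𝕂] X) :
    ((({x | IrregularVector 𝕂 (⇑T) x} ∈ residual X) ∧
        ¬ (∀ x : X, Tendsto (fun n : ℕ => (⇑T)^[n] x) atTop (nhds 0)) ∧
        Dense (NSset (⇑T))) ∨
      (¬ ({x | IrregularVector 𝕂 (⇑T) x} ∈ residual X) ∧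
        (∀ x : X, Tendsto (fun n : ℕ => (⇑T)^[n] x) atTop (nhds 0)) ∧
        Dense (NSset (⇑T))) ∨
      (¬ ({x | IrregularVector 𝕂 (⇑T) x} ∈ residual X) ∧
        ¬ (∀ x : X, Tendsto (fun n : ℕ => (⇑T)^[n] x) atTop (nhds 0)) ∧
        ¬ Dense (NSset (⇑T)))) ∧
    (¬ IsClosed (NSset (⇑T)) → LiYorkeChaotic (⇑T)) ∧
    (TopologicalSpace.SeparableSpace X → Dense (NSset (⇑T)) → ¬ IsClosed (NSset (⇑T)) →
      DenselyLiYorkeChaotic (⇑T)) :=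
  frechet_trichotomy_and_liYorke_general hinv T
end
end
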